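/- arXiv:2510.00228 — 10 statements merged into one kernel-verified Lean document; each statement's English description precedes it below -/
import Mathlib

section
/- Let G be a finite connected bipartite simple graph with diameter 3. Then G is radio graceful if and only if the antipodal graph A(G) is traceable. -/
open SimpleGraph

/-- A radio labeling of a graph `G`: for all distinct vertices `u, v`,
`|f u - f v| + d(u,v) ≥ diam(G) + 1`. -/
def IsRadioLabeling {V : Type*} (G : SimpleGraph V) (f : V → ℕ) : Prop :=
  ∀ u v : V, u ≠ v →
    (G.diam : ℤ) + 1 ≤ |(f u : ℤ) - (f v : ℤ)| + (G.dist u v : ℤ)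

/-- A graph is radio graceful if it has a radio labeling whose image is exactly
`{1, ..., |V(G)|}`. -/
def RadioGraceful {V : Type*} (G : SimpleGraph V) : Prop :=
  ∃ f : V → ℕ, IsRadioLabeling G f ∧ Set.range f = Set.Icc 1 (Nat.card V)

/-- The antipodal graph of `G`: vertices are adjacent iff their distance in `G`
equals the diameter of `G`. -/
def antipodalGraph {V : Type*} (G : SimpleGraph V) : SimpleGraph V where
  Adj u v := u ≠ v ∧ G.dist u v = G.diam
  symm := ⟨fun u v ⟨h1, h2⟩ => ⟨h1.symm, by rwa [SimpleGraph.dist_comm]⟩⟩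
  loopless := ⟨fun v h => h.1 rfl⟩

/-- A graph is traceable if it has a Hamiltonian path. -/
def Traceable {V : Type*} (G : SimpleGraph V) : Prop :=
  ∃ (u v : V) (p : G.Walk u v), p.IsPath ∧ ∀ w : V, w ∈ p.support

/-- `P` together with its complement forms a bipartition of `G`. -/
def IsBipartition {V : Type*} (G : SimpleGraph V) (P : Set V) : Prop :=
  ∀ u v : V, G.Adj u v → (u ∈ P ↔ v ∉ P)

/-- A graph is bipartite if its vertices can be split into two parts with all
edges between the parts. -/
def Bipartite {V : Type*} (G : SimpleGraph V) : Prop :=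
  ∃ P : Set V, IsBipartition G P

/-!
Listing the vertices as `v₀, …, vₙ₋₁` and labelling `vᵢ` by `i + 1` identifies radio graceful
labelings and Hamiltonian paths of `A(G)` with orderings of the vertices. Labels that differ by one
force distance at least `diam G`, so consecutive vertices of a radio graceful labeling are
antipodal. Conversely, for diameter 3 only vertices two steps apart on a Hamiltonian path of `A(G)`
need an argument: both lie at distance 3 from the vertex between them, hence on the same side of
the bipartition, hence at distance at least 2.
-/

section Bipartition

variable {V : Type*} {G : SimpleGraph V} {P : Set V}

open Classical in
noncomputable def IsBipartition.toColoring (hP : IsBipartition G P) : G.Coloring Bool :=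
  Coloring.mk (fun v => decide (v ∈ P)) fun {u v} h => by
    simp only [ne_eq, decide_eq_decide]
    have := hP u v h
    tauto

theorem IsBipartition.not_adj_of_even_length (hP : IsBipartition G P) {u v : V}
    (p : G.Walk u v) (hp : Even p.length) : ¬ G.Adj u v := fun h =>
  hP.toColoring.valid h <| Bool.eq_iff_iff.2 <| (hP.toColoring.even_length_iff_congr p).1 hp

theorem IsBipartition.two_le_dist_of_even_dist_add (hP : IsBipartition G P)
    (hconn : G.Connected) {u v w : V} (huv : u ≠ v) (h : Even (G.dist u w + G.dist w v)) :
    2 ≤ G.dist u v := by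
  obtain ⟨p, hp⟩ := hconn.exists_walk_length_eq_dist u w
  obtain ⟨q, hq⟩ := hconn.exists_walk_length_eq_dist w v
  have hnadj : ¬ G.Adj u v :=
    hP.not_adj_of_even_length (p.append q) (by rwa [Walk.length_append, hp, hq])
  have hpos := hconn.pos_dist_of_ne huv
  have hne1 : G.dist u v ≠ 1 := fun h1 => hnadj (dist_eq_one_iff_adj.1 h1)
  omega

end Bipartition

theorem traceable_iff_exists_equiv {V : Type*} [Fintype V] [Nonempty V] (G : SimpleGraph V) :
    Traceable G ↔ ∃ e : Fin (Fintype.card V) ≃ V,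
      ∀ i (hi : i + 1 < Fintype.card V), G.Adj (e ⟨i, by omega⟩) (e ⟨i + 1, hi⟩) := by
  classical
  constructor
  · rintro ⟨u, v, p, hp, hall⟩
    have hH := hp.isHamiltonian_of_mem hall
    refine ⟨(finCongr hH.length_support.symm).trans hH.getVertEquiv, fun i hi => ?_⟩
    simpa using p.adj_getVert_succ (by have := hH.length_eq; omega)
  · rintro ⟨e, he⟩
    have hne : List.ofFn e ≠ [] := by simp [Fintype.card_ne_zero]
    have hchain : (List.ofFn e).IsChain G.Adj := List.isChain_ofFn.2 he
    refine ⟨_, _, Walk.ofSupport _ hne hchain, ?_, fun w => ?_⟩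
    · rw [Walk.isPath_def, Walk.support_ofSupport]
      exact List.nodup_ofFn.2 e.injective
    · simp [List.mem_ofFn']

theorem radioGraceful_iff_exists_equiv {V : Type*} [Fintype V] (G : SimpleGraph V) :
    RadioGraceful G ↔ ∃ e : Fin (Fintype.card V) ≃ V,
      IsRadioLabeling G (fun v => (e.symm v : ℕ) + 1) := by
  rw [RadioGraceful, Nat.card_eq_fintype_card]
  constructor
  · rintro ⟨f, hf, hrange⟩
    have hmem (v : V) : 1 ≤ f v ∧ f v ≤ Fintype.card V :=
      Set.mem_Icc.1 (hrange ▸ Set.mem_range_self v)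
    let g : V → Fin (Fintype.card V) := fun v => ⟨f v - 1, by have := hmem v; omega⟩
    have hg : g.Bijective := by
      rw [Fintype.bijective_iff_surjective_and_card]
      refine ⟨fun i => ?_, by simp⟩
      obtain ⟨v, hv⟩ : (i : ℕ) + 1 ∈ Set.range f := hrange ▸ ⟨by omega, i.isLt⟩
      exact ⟨v, Fin.ext (by simp [g, hv])⟩
    refine ⟨(Equiv.ofBijective g hg).symm, ?_⟩
    convert hf using 2 with v
    have := (hmem v).1
    simp only [Equiv.symm_symm, Equiv.ofBijective_apply, g]
    omega
  · rintro ⟨e, he⟩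
    refine ⟨_, he, Set.ext fun k => ⟨?_, fun hk => ?_⟩⟩
    · rintro ⟨v, rfl⟩
      exact ⟨Nat.le_add_left 1 _, (e.symm v).isLt⟩
    · obtain ⟨hk1, hk2⟩ := hk
      exact ⟨e ⟨k - 1, by omega⟩, by simp only [Equiv.symm_apply_apply]; omega⟩

theorem IsRadioLabeling.antipodalGraph_adj {V : Type*} {G : SimpleGraph V} {f : V → ℕ}
    (hf : IsRadioLabeling G f) (hG : G.ediam ≠ ⊤) {u v : V} (huv : f v = f u + 1) :
    (antipodalGraph G).Adj u v := by
  have hne : u ≠ v := by rintro rfl; omega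
  refine ⟨hne, le_antisymm (G.dist_le_diam hG) ?_⟩
  have := hf u v hne
  rw [huv, Nat.cast_succ, sub_add_cancel_left, abs_neg, abs_one] at this
  omega

theorem isRadioLabeling_of_forall_lt {V : Type*} {G : SimpleGraph V} {n : ℕ} (e : Fin n ≃ V)
    (h : ∀ i j : Fin n, i < j → (G.diam : ℤ) + 1 ≤ ((j : ℕ) - (i : ℕ) : ℤ) + G.dist (e i) (e j)) :
    IsRadioLabeling G (fun v => (e.symm v : ℕ) + 1) := by
  intro u v huv
  obtain ⟨i, rfl⟩ := e.surjective u
  obtain ⟨j, rfl⟩ := e.surjective v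
  simp only [Equiv.symm_apply_apply]
  push_cast
  rcases (e.injective.ne_iff.1 huv).lt_or_gt with hij | hij
  · have := h i j hij
    rw [abs_sub_comm, abs_of_nonneg (by omega)]
    linarith
  · have := h j i hij
    rw [abs_of_nonneg (by omega), G.dist_comm]
    linarith

theorem IsBipartition.isRadioLabeling_of_antipodal_path {V : Type*} {G : SimpleGraph V}
    {P : Set V} (hP : IsBipartition G P) (hconn : G.Connected) (hdiam : G.diam = 3) {n : ℕ}
    (e : Fin n ≃ V)
    (he : ∀ i (hi : i + 1 < n), (antipodalGraph G).Adj (e ⟨i, by omega⟩) (e ⟨i + 1, hi⟩)) :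
    IsRadioLabeling G (fun v => (e.symm v : ℕ) + 1) := by
  refine isRadioLabeling_of_forall_lt e fun ⟨i, hi⟩ ⟨j, hj⟩ hij => ?_
  rw [Fin.mk_lt_mk] at hij
  have hne {k l : ℕ} (hk : k < n) (hl : l < n) (hkl : k < l) : e ⟨k, hk⟩ ≠ e ⟨l, hl⟩ :=
    e.injective.ne (Fin.ne_of_lt hkl)
  have hpos := hconn.pos_dist_of_ne (hne hi hj hij)
  rw [hdiam]
  obtain rfl | rfl | hgap : j = i + 1 ∨ j = i + 2 ∨ i + 3 ≤ j := by omega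
  · have hanti := (he i hj).2
    rw [hdiam] at hanti
    push_cast
    omega
  · have h₁ := (he i (by omega)).2
    have h₂ := (he (i + 1) hj).2
    have := hP.two_le_dist_of_even_dist_add hconn (hne hi hj hij) (by rw [h₁, h₂, hdiam]; decide)
    push_cast
    omega
  · push_cast
    omega

theorem radioGraceful_iff_antipodal_traceable_of_bipartite_diam_three
    {V : Type*} [Fintype V] (G : SimpleGraph V)
    (hconn : G.Connected) (hbip : Bipartite G) (hdiam : G.diam = 3) :
    RadioGraceful G ↔ Traceable (antipodalGraph G) := by
  obtain ⟨P, hP⟩ := hbip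
  have := hconn.nonempty
  rw [radioGraceful_iff_exists_equiv, traceable_iff_exists_equiv]
  exact exists_congr fun e =>
    ⟨fun hf i hi => hf.antipodalGraph_adj (connected_iff_ediam_ne_top.1 hconn) (by simp),
      hP.isRadioLabeling_of_antipodal_path hconn hdiam e⟩
end

section
/- Let n and r be integers with 1 < r < n/2, and let G be a finite connected r-regular bipartite simple graph on 2n vertices with diameter 3. Then G is radio graceful. -/
open SimpleGraph

/-! In a connected bipartite graph of diameter 3, two vertices are at distance 3 exactly when they
lie in opposite parts and are not adjacent, so the antipodal graph of `G` is its bipartite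
complement. Regularity forces both parts to have `n` vertices, so the antipodal graph is a balanced
bipartite graph of minimum degree `n - r > n / 2`, and the longest-path argument (with Pósa
rotations) shows that it has a Hamiltonian path. Labelling the vertices `1, …, 2n` along that path
is a radio labeling: consecutive vertices are at distance 3, and vertices two steps apart lie in
the same part, hence are at distance 2. -/

open Finset SimpleGraph

namespace IsBipartition

variable {V : Type*} {G : SimpleGraph V} {P : Set V}

lemma compl (hP : IsBipartition G P) : IsBipartition G Pᶜ := fun u v h => by
  simpa using (hP u v h).not

lemma mem_iff_of_isChain {l : List V} (hP : IsBipartition G P) (hch : l.IsChain G.Adj) {i : ℕ}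
    (hi : i + 1 < l.length) : l[i] ∈ P ↔ l[i + 1] ∉ P :=
  hP _ _ (List.isChain_iff_getElem.1 hch i hi)

lemma even_length_iff (hP : IsBipartition G P) {u v : V} (p : G.Walk u v) :
    Even p.length ↔ (u ∈ P ↔ v ∈ P) := by
  induction p with
  | nil => simp
  | cons h _ ih =>
    have := hP _ _ h
    simp only [Walk.length_cons, Nat.even_add_one, ih]
    tauto

lemma even_dist_iff (hP : IsBipartition G P) (hconn : G.Connected) (u v : V) :
    Even (G.dist u v) ↔ (u ∈ P ↔ v ∈ P) := by
  obtain ⟨p, hp⟩ := hconn.exists_walk_length_eq_dist u v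
  rw [← hp, hP.even_length_iff]

lemma card_eq_card_compl [Fintype V] [DecidableEq V] [DecidableRel G.Adj] {A : Finset V}
    (hA : IsBipartition G ↑A) {r : ℕ} (hreg : G.IsRegularOfDegree r) (hr : r ≠ 0) :
    #A = #Aᶜ := by
  have hAB : G.IsBipartiteWith ↑A ↑Aᶜ := by
    refine ⟨by simpa using disjoint_compl_right, fun u v h => ?_⟩
    have := hA u v h
    simp only [SetLike.mem_coe, coe_compl, Set.mem_compl_iff] at this ⊢
    tauto
  have hsum := isBipartiteWith_sum_degrees_eq hAB
  simp only [hreg _, sum_const, smul_eq_mul] at hsum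
  exact Nat.eq_of_mul_eq_mul_right (Nat.pos_of_ne_zero hr) hsum

end IsBipartition

namespace List

variable {V : Type*}

lemma exists_nodup_isChain_forall_length_le [Fintype V] (R : V → V → Prop) :
    ∃ l : List V, l.Nodup ∧ l.IsChain R ∧
      ∀ l' : List V, l'.Nodup → l'.IsChain R → l'.length ≤ l.length := by
  let S : Set ℕ := {m | ∃ l : List V, l.Nodup ∧ l.IsChain R ∧ l.length = m}
  have hS : BddAbove S := ⟨Fintype.card V, by rintro _ ⟨l, hl, -, rfl⟩; exact hl.length_le_card⟩
  obtain ⟨l, hnd, hch, hlen⟩ := Nat.sSup_mem (⟨0, [], by simp, by simp, rfl⟩ : S.Nonempty) hS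
  exact ⟨l, hnd, hch, fun l' h₁ h₂ => hlen ▸ le_csSup hS ⟨l', h₁, h₂, rfl⟩⟩

lemma Nodup.card_le_card_of_pred_mem [DecidableEq V] {l : List V} (hnd : l.Nodup)
    (hl : 0 < l.length) {S T : Finset V} (hS : ∀ y ∈ S, y ∈ l) (hS₀ : l[0] ∉ S)
    (hT : ∀ i (hi : i + 1 < l.length), l[i + 1] ∈ S → l[i] ∈ T) : #S ≤ #T := by
  calc #S ≤ #(T.image fun x => l.getD (l.idxOf x + 1) x) := card_le_card fun y hy => ?_
    _ ≤ #T := card_image_le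
  obtain ⟨j, hj, rfl⟩ := getElem_of_mem (hS y hy)
  obtain ⟨i, rfl⟩ : ∃ i, j = i + 1 :=
    Nat.exists_eq_succ_of_ne_zero (by rintro rfl; exact hS₀ hy)
  exact mem_image.2 ⟨l[i], hT i hj hy, by rw [hnd.idxOf_getElem, getD_eq_getElem]⟩

/-- Pósa rotation: `w, l[i], …, l[0], l[i+1], …` is a longer path. -/
lemma exists_longer_of_adj_getElem {H : SimpleGraph V} {l : List V} (hnd : l.Nodup)
    (hch : l.IsChain H.Adj) {w : V} (hw : w ∉ l) {i : ℕ} (hi : i + 1 < l.length)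
    (hwi : H.Adj w l[i]) (h₀ : H.Adj l[0] l[i + 1]) :
    ∃ l' : List V, l'.Nodup ∧ l'.IsChain H.Adj ∧ l'.length = l.length + 1 := by
  have hperm : ((l.take (i + 1)).reverse ++ l.drop (i + 1)).Perm l := by
    simpa using (l.take (i + 1)).reverse_perm.append_right (l.drop (i + 1))
  refine ⟨w :: ((l.take (i + 1)).reverse ++ l.drop (i + 1)),
    nodup_cons.2 ⟨fun h => hw (hperm.mem_iff.1 h), hperm.nodup_iff.2 hnd⟩, ?_,
    by simp [hperm.length_eq]⟩
  rw [isChain_cons, isChain_append, isChain_reverse, head?_append, head?_reverse,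
    getLast?_reverse, head?_take, getLast?_take, head?_drop]
  refine ⟨?_, ⟨(hch.take _).imp fun _ _ h => h.symm, hch.drop _, ?_⟩⟩
  · simpa [getElem?_eq_getElem (Nat.lt_of_succ_lt hi)] using hwi
  · simpa [getElem?_eq_getElem hi, head?_eq_getElem?,
      getElem?_eq_getElem (Nat.zero_lt_of_lt hi)] using h₀

end List

section Hamiltonian

variable {V : Type*} [Fintype V] [DecidableEq V] {H : SimpleGraph V} [DecidableRel H.Adj]
  {A : Finset V}

lemma mem_of_forall_length_le (hA : IsBipartition H ↑A) (hcard : #A = #Aᶜ)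
    (hdeg : ∀ v, #A < 2 * H.degree v) {l : List V} (hnd : l.Nodup) (hch : l.IsChain H.Adj)
    (hmax : ∀ l' : List V, l'.Nodup → l'.IsChain H.Adj → l'.length ≤ l.length)
    (hl : 0 < l.length) (h₀ : l[0] ∈ A) (v : V) : v ∈ l := by
  have hnbr : ∀ y ∈ H.neighborFinset l[0], y ∈ l := fun y hy => by
    by_contra hyl
    simpa using hmax (y :: l) (List.nodup_cons.2 ⟨hyl, hnd⟩)
      (hch.cons fun _ hx => by simp_all [List.head?_eq_getElem?, adj_comm])
  have hcovered : ∀ w ∉ A, w ∈ l := fun w hwA => by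
    by_contra hwl
    have hsub : H.neighborFinset w ⊆ A := fun x hx =>
      by simpa [hwA] using hA w x ((mem_neighborFinset ..).1 hx)
    -- a neighbour of `w` preceding a neighbour of `l[0]` would allow a rotation
    have hle := hnd.card_le_card_of_pred_mem hl hnbr (by simp) (T := A \ H.neighborFinset w)
      fun i hi hy => by
        rw [mem_neighborFinset] at hy
        refine mem_sdiff.2 ⟨?_, fun hwi => ?_⟩
        · exact (hA.mem_iff_of_isChain hch hi).2 ((hA _ _ hy).1 h₀)
        · obtain ⟨l', hnd', hch', hlen'⟩ := List.exists_longer_of_adj_getElem hnd hch hwl hi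
            ((mem_neighborFinset ..).1 hwi) hy
          have := hmax l' hnd' hch'
          omega
    simp only [card_sdiff_of_subset hsub, card_neighborFinset_eq_degree] at hle
    have := hdeg w
    have := hdeg l[0]
    omega
  by_contra hv
  have hvA : v ∈ A := by_contra fun h => hv (hcovered v h)
  -- `l` alternates between the parts, starting in `A`, and misses `v ∈ A`
  have hle := hnd.card_le_card_of_pred_mem hl (S := Aᶜ) (T := A.erase v)
    (fun y hy => hcovered y (mem_compl.1 hy)) (by simpa using h₀) fun i hi hy =>
      mem_erase.2 ⟨by rintro rfl; exact hv (List.getElem_mem _),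
        (hA.mem_iff_of_isChain hch hi).2 (mem_compl.1 hy)⟩
  have := card_pos.2 ⟨v, hvA⟩
  rw [card_erase_of_mem hvA] at hle
  omega

theorem exists_nodup_isChain_forall_mem (hA : IsBipartition H ↑A) (hcard : #A = #Aᶜ)
    (hdeg : ∀ v, #A < 2 * H.degree v) :
    ∃ l : List V, l.Nodup ∧ l.IsChain H.Adj ∧ ∀ v, v ∈ l := by
  obtain ⟨l, hnd, hch, hmax⟩ := List.exists_nodup_isChain_forall_length_le H.Adj
  refine ⟨l, hnd, hch, fun v => ?_⟩
  have hl : 0 < l.length := Nat.lt_of_lt_of_le Nat.one_pos (hmax [v] (by simp) (by simp))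
  by_cases h₀ : l[0] ∈ A
  · exact mem_of_forall_length_le hA hcard hdeg hnd hch hmax hl h₀ v
  · exact mem_of_forall_length_le (A := Aᶜ) (by simpa using hA.compl)
      (by rw [compl_compl, hcard]) (by simpa [← hcard] using hdeg) hnd hch hmax hl
      (mem_compl.2 h₀) v

end Hamiltonian

section DiameterThree

variable {V : Type*} {G : SimpleGraph V} {P : Set V}

lemma antipodalGraph_adj_iff (hconn : G.Connected) (hP : IsBipartition G P) (hdiam : G.diam = 3)
    {u v : V} : (antipodalGraph G).Adj u v ↔ (u ∈ P ↔ v ∉ P) ∧ ¬G.Adj u v := by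
  have hle : G.dist u v ≤ 3 := hdiam ▸ dist_le_diam (ediam_ne_top_of_diam_ne_zero (by omega))
  have hpar := hP.even_dist_iff hconn u v
  change u ≠ v ∧ G.dist u v = G.diam ↔ _
  rw [hdiam, ← dist_eq_one_iff_adj]
  constructor
  · rintro ⟨-, h3⟩
    have : ¬Even (G.dist u v) := by rw [h3]; decide
    exact ⟨by tauto, by omega⟩
  · rintro ⟨hop, h1⟩
    have hne : u ≠ v := by rintro rfl; tauto
    have hodd : ¬Even (G.dist u v) := by tauto
    have := hconn.pos_dist_of_ne hne
    rw [Nat.even_iff] at hodd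
    exact ⟨hne, by omega⟩

lemma isBipartition_antipodalGraph (hconn : G.Connected) (hP : IsBipartition G P)
    (hdiam : G.diam = 3) : IsBipartition (antipodalGraph G) P := fun _ _ h =>
  ((antipodalGraph_adj_iff hconn hP hdiam).1 h).1

lemma degree_antipodalGraph_add_degree [Fintype V] [DecidableEq V] [DecidableRel G.Adj]
    [DecidableRel (antipodalGraph G).Adj] (hconn : G.Connected) {A : Finset V}
    (hA : IsBipartition G ↑A) (hdiam : G.diam = 3) (hcard : #A = #Aᶜ) (v : V) :
    (antipodalGraph G).degree v + G.degree v = #A := by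
  have hside : #{w | v ∈ A ↔ w ∉ A} = #A := by
    by_cases hv : v ∈ A
    · simp [hv, filter_not, hcard, compl_eq_univ_sdiff]
    · simp [hv]
  have hnbr : (antipodalGraph G).neighborFinset v =
      ({w | v ∈ A ↔ w ∉ A} : Finset V) \ G.neighborFinset v := by
    ext w
    simp [antipodalGraph_adj_iff hconn hA hdiam]
  have hsub : G.neighborFinset v ⊆ ({w | v ∈ A ↔ w ∉ A} : Finset V) := fun w hw => by
    simpa using hA v w ((mem_neighborFinset ..).1 hw)
  rw [← card_neighborFinset_eq_degree, ← card_neighborFinset_eq_degree, hnbr,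
    card_sdiff_add_card_eq_card hsub, hside]

lemma diam_add_one_le_of_isChain_antipodalGraph (hconn : G.Connected) (hP : IsBipartition G P)
    (hdiam : G.diam = 3) {l : List V} (hnd : l.Nodup) (hch : l.IsChain (antipodalGraph G).Adj)
    {i j : ℕ} (hij : i < j) (hj : j < l.length) : G.diam + 1 ≤ j - i + G.dist l[i] l[j] := by
  have hne : l[i] ≠ l[j] := fun h => hij.ne ((hnd.getElem_inj_iff).1 h)
  have hpos := hconn.pos_dist_of_ne hne
  obtain rfl | rfl | h3 : j = i + 1 ∨ j = i + 2 ∨ i + 3 ≤ j := by omega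
  · have := List.isChain_iff_getElem.1 hch i hj
    simp [this.2]
  · have hH := isBipartition_antipodalGraph hconn hP hdiam
    have heven : Even (G.dist l[i] l[i + 2]) := (hP.even_dist_iff hconn _ _).2 <| by
      have h₁ := hH.mem_iff_of_isChain hch (i := i) (by omega)
      have h₂ := hH.mem_iff_of_isChain hch hj
      tauto
    rw [Nat.even_iff] at heven
    omega
  · omega

end DiameterThree

lemma radioGraceful_of_forall_getElem {V : Type*} [Fintype V] [DecidableEq V] (G : SimpleGraph V)
    {l : List V} (hnd : l.Nodup) (hcov : ∀ v, v ∈ l)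
    (h : ∀ i j, (hij : i < j) → (hj : j < l.length) → G.diam + 1 ≤ j - i + G.dist l[i] l[j]) :
    RadioGraceful G := by
  have hgap : ∀ u v, l.idxOf u < l.idxOf v →
      (G.diam : ℤ) + 1 ≤ |((l.idxOf u + 1 : ℕ) : ℤ) - ((l.idxOf v + 1 : ℕ) : ℤ)| + G.dist u v := by
    intro u v huv
    have := h _ _ huv (List.idxOf_lt_length_iff.2 (hcov v))
    simp only [List.getElem_idxOf] at this
    rw [abs_sub_comm, abs_of_nonneg (by omega)]
    omega
  refine ⟨fun v => l.idxOf v + 1, fun u v huv => ?_, ?_⟩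
  · rcases lt_or_gt_of_ne (mt (List.idxOf_inj (hcov u)).1 huv) with h | h
    · exact hgap u v h
    · rw [abs_sub_comm, SimpleGraph.dist_comm]
      exact hgap v u h
  · have hcard : Nat.card V = l.length := by
      rw [Nat.card_eq_fintype_card, ← card_univ, ← List.toFinset_card_of_nodup hnd]
      congr
      exact (eq_univ_of_forall fun v => List.mem_toFinset.2 (hcov v)).symm
    ext m
    simp only [Set.mem_range, Set.mem_Icc, hcard]
    constructor
    · rintro ⟨v, rfl⟩
      have := List.idxOf_lt_length_iff.2 (hcov v)
      omega
    · rintro ⟨h₁, h₂⟩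
      exact ⟨l[m - 1], by rw [hnd.idxOf_getElem]; omega⟩

theorem radioGraceful_of_regular_bipartite_diam_three
    {V : Type*} [Fintype V] (G : SimpleGraph V) [DecidableRel G.Adj]
    (n r : ℕ) (hr1 : 1 < r) (hr2 : 2 * r < n)
    (hconn : G.Connected) (hbip : Bipartite G)
    (hreg : G.IsRegularOfDegree r)
    (hcard : Fintype.card V = 2 * n) (hdiam : G.diam = 3) :
    RadioGraceful G := by
  classical
  obtain ⟨P, hP⟩ := hbip
  have hA : IsBipartition G ↑P.toFinset := by rwa [Set.coe_toFinset]
  have hbal := hA.card_eq_card_compl hreg (by omega)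
  have hAn : #P.toFinset = n := by
    have := card_add_card_compl P.toFinset
    rw [hcard] at this
    omega
  obtain ⟨l, hnd, hch, hcov⟩ := exists_nodup_isChain_forall_mem
    (isBipartition_antipodalGraph hconn hA hdiam) hbal fun v => by
      have := degree_antipodalGraph_add_degree hconn hA hdiam hbal v
      rw [hreg v] at this
      omega
  exact radioGraceful_of_forall_getElem G hnd hcov fun i j hij hj =>
    diam_add_one_le_of_isChain_antipodalGraph hconn hP hdiam hnd hch hij hj
end

section
/- Let n and r be integers with n/2 < r < n, and let G be a finite r-regular bipartite simple graph on 2n vertices. Then G has diameter 3. -/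
open SimpleGraph

/-!
Double counting the edges shows that the two sides `s`, `t` both have `n` vertices. Two vertices
on the same side have their `r` neighbours among the `n < 2r` vertices of the other side, hence a
common neighbour: they are at distance at most two. A vertex of `s` and a vertex of `t` are then at
distance at most three, through a neighbour of the latter. Conversely, since `r < n`, some `u ∈ s`
is not adjacent to some `v ∈ t`; these have no common neighbour either, as it would lie on both
sides.
-/

namespace SimpleGraph

open Finset

variable {V : Type*} {G : SimpleGraph V}

theorem IsBipartition.isBipartiteWith_compl {P : Set V} (h : IsBipartition G P) :
    G.IsBipartiteWith P Pᶜ where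
  disjoint := disjoint_compl_right
  mem_of_adj u v huv := by
    by_cases hu : u ∈ P
    · exact .inl ⟨hu, (h u v huv).mp hu⟩
    · exact .inr ⟨hu, by simpa using mt (h u v huv).mpr hu⟩

section Bipartite

variable [G.LocallyFinite] {s t : Finset V} {r : ℕ}

theorem IsBipartiteWith.card_eq_of_isRegularOfDegree (h : G.IsBipartiteWith s t)
    (hreg : G.IsRegularOfDegree r) (hr : r ≠ 0) : #s = #t := by
  have hsum := isBipartiteWith_sum_degrees_eq h
  simp only [hreg.degree_eq, sum_const, smul_eq_mul] at hsum
  exact Nat.eq_of_mul_eq_mul_right (Nat.pos_of_ne_zero hr) hsum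

theorem IsBipartiteWith.edist_le_two (h : G.IsBipartiteWith s t) {u v : V} (hu : u ∈ s)
    (hv : v ∈ s) (hdeg : #t < G.degree u + G.degree v) : G.edist u v ≤ 2 := by
  classical
  rw [← card_neighborFinset_eq_degree, ← card_neighborFinset_eq_degree] at hdeg
  obtain ⟨w, hw⟩ := inter_nonempty_of_card_lt_card_add_card
    (isBipartiteWith_neighborFinset_subset h hu) (isBipartiteWith_neighborFinset_subset h hv) hdeg
  rw [mem_inter, mem_neighborFinset, mem_neighborFinset] at hw
  exact (Walk.cons hw.1 (Walk.cons hw.2.symm Walk.nil)).edist_le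

theorem IsBipartiteWith.edist_le_three (h : G.IsBipartiteWith s t)
    (hreg : G.IsRegularOfDegree r) (ht : #t < 2 * r) {u v : V} (hu : u ∈ s)
    (hv : v ∈ s ∨ v ∈ t) : G.edist u v ≤ 3 := by
  have hsame : ∀ {w}, w ∈ s → G.edist u w ≤ 2 := fun hw ↦
    h.edist_le_two hu hw (by rw [hreg.degree_eq, hreg.degree_eq]; omega)
  rcases hv with hv | hv
  · exact (hsame hv).trans (by norm_num)
  · have hnonempty : (G.neighborFinset v).Nonempty := by
      rw [← card_pos, card_neighborFinset_eq_degree, hreg.degree_eq]; omega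
    obtain ⟨w, hw⟩ := hnonempty
    rw [mem_neighborFinset] at hw
    calc G.edist u v ≤ G.edist u w + G.edist w v := SimpleGraph.edist_triangle
      _ ≤ 2 + 1 := add_le_add (hsame (h.mem_of_mem_adj' hv hw.symm))
          (edist_eq_one_iff_adj.mpr hw.symm).le
      _ = 3 := by norm_num

theorem IsBipartiteWith.ediam_le_three (h : G.IsBipartiteWith s t)
    (hreg : G.IsRegularOfDegree r) (hs : #s < 2 * r) (ht : #t < 2 * r)
    (hcover : ∀ v, v ∈ s ∨ v ∈ t) : G.ediam ≤ 3 := by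
  refine ediam_le_of_edist_le fun u v ↦ ?_
  rcases hcover u with hu | hu
  · exact h.edist_le_three hreg ht hu (hcover v)
  · exact h.symm.edist_le_three hreg hs hu (hcover v).symm

end Bipartite

theorem IsBipartiteWith.three_le_edist {s t : Set V} (h : G.IsBipartiteWith s t) {u v : V}
    (hu : u ∈ s) (hv : v ∈ t) (hadj : ¬G.Adj u v) : 3 ≤ G.edist u v := by
  have hne : u ≠ v := by
    rintro rfl
    exact Set.disjoint_left.mp h.disjoint hu hv
  have hno_common : G.commonNeighbors u v = ∅ := by
    refine Set.eq_empty_of_forall_notMem fun w hw ↦ ?_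
    rw [mem_commonNeighbors] at hw
    exact Set.disjoint_left.mp h.disjoint (h.mem_of_mem_adj' hv hw.2.symm)
      (h.mem_of_mem_adj hu hw.1)
  exact Order.add_one_le_of_lt (two_lt_edist_iff.mpr ⟨hne, hadj, hno_common⟩)

theorem exists_not_adj_of_degree_lt_card [G.LocallyFinite] {t : Finset V} {u : V}
    (hdeg : G.degree u < #t) :
    ∃ v ∈ t, ¬G.Adj u v := by
  rw [← card_neighborFinset_eq_degree] at hdeg
  obtain ⟨v, hvt, hv⟩ := exists_mem_notMem_of_card_lt_card hdeg
  exact ⟨v, hvt, by rwa [mem_neighborFinset] at hv⟩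

end SimpleGraph

open Finset

theorem diam_eq_three_of_regular_bipartite
    {V : Type*} [Fintype V] (G : SimpleGraph V) [DecidableRel G.Adj]
    (n r : ℕ) (hr1 : n < 2 * r) (hr2 : r < n)
    (hbip : Bipartite G) (hreg : G.IsRegularOfDegree r)
    (hcard : Fintype.card V = 2 * n) :
    G.diam = 3 := by
  classical
  obtain ⟨P, hP⟩ := hbip
  set s := P.toFinset
  have hst : G.IsBipartiteWith ↑s ↑sᶜ := by simpa [s] using hP.isBipartiteWith_compl
  have hcard_s : #s = n ∧ #sᶜ = n := by
    have hsum : #s + #sᶜ = 2 * n := by rw [card_add_card_compl, hcard]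
    have := hst.card_eq_of_isRegularOfDegree hreg (by omega)
    omega
  obtain ⟨u, hu⟩ : s.Nonempty := by rw [← card_pos]; omega
  obtain ⟨v, hv, huv⟩ := exists_not_adj_of_degree_lt_card (u := u) (t := sᶜ)
    (by rw [hreg.degree_eq]; omega)
  have hupper : G.ediam ≤ 3 := hst.ediam_le_three hreg (by omega) (by omega)
    fun w ↦ (em (w ∈ s)).imp_right mem_compl.mpr
  have hlower : 3 ≤ G.ediam := (hst.three_le_edist hu hv huv).trans edist_le_ediam
  rw [diam, le_antisymm hupper hlower]
  rfl
end

section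
/- Let n ≥ 3 and let G be a finite (n-1)-regular bipartite simple graph on 2n vertices. Then G is not radio graceful. -/
open SimpleGraph

/-!
Both sides of the bipartition have `n` vertices, by double counting edges. Hence every vertex `u`
is adjacent to all but exactly one vertex of the other side, its antipode, and two vertices on the
same side have `2(n - 1) > n` neighbours in the other side, hence a common one. So `G` is
connected, the antipode of `u` is the only vertex at distance `> 2` from `u`, and `diam G ≥ 3`.
In a radio graceful labeling, the vertices labelled `1` and `3` both lie at distance `≥ diam G`
from the vertex labelled `2`, so both would be its antipode.
-/

open Finset

section RadioLabeling

variable {V : Type*} {G : SimpleGraph V}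

theorem IsRadioLabeling.diam_le_dist {f : V → ℕ} (hf : IsRadioLabeling G f) {u v : V}
    (h : f v = f u + 1) : G.diam ≤ G.dist u v := by
  have hne : u ≠ v := by rintro rfl; omega
  have := hf u v hne
  rw [h, Nat.cast_add, Nat.cast_one, sub_add_cancel_left, abs_neg, abs_one] at this
  omega

theorem RadioGraceful.exists_two_far (hG : RadioGraceful G) (hV : 3 ≤ Nat.card V) :
    ∃ b a c : V, a ≠ c ∧ G.diam ≤ G.dist b a ∧ G.diam ≤ G.dist b c := by
  obtain ⟨f, hf, hrange⟩ := hG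
  have label : ∀ k, 1 ≤ k → k ≤ 3 → ∃ v, f v = k := fun k h1 h3 => by
    rw [← Set.mem_range, hrange]
    exact ⟨h1, h3.trans hV⟩
  obtain ⟨a, ha⟩ := label 1 le_rfl (by norm_num)
  obtain ⟨b, hb⟩ := label 2 (by norm_num) (by norm_num)
  obtain ⟨c, hc⟩ := label 3 (by norm_num) le_rfl
  refine ⟨b, a, c, by rintro rfl; omega, ?_, hf.diam_le_dist (by omega)⟩
  rw [SimpleGraph.dist_comm]
  exact hf.diam_le_dist (by omega)

end RadioLabeling

namespace SimpleGraph

variable {V : Type*} {G : SimpleGraph V} {u v : V}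

theorem lt_edist_of_lt_dist {k : ℕ} (h : k < G.dist u v) : (k : ℕ∞) < G.edist u v := by
  rw [← (Reachable.of_dist_ne_zero (by omega)).coe_dist_eq_edist]
  exact_mod_cast h

theorem Connected.lt_diam_of_lt_edist [Finite V] (hconn : G.Connected) {k : ℕ}
    (h : (k : ℕ∞) < G.edist u v) : k < G.diam := by
  have := hconn.nonempty
  rw [← (hconn.preconnected u v).coe_dist_eq_edist, Nat.cast_lt] at h
  exact h.trans_le (dist_le_diam (connected_iff_ediam_ne_top.1 hconn))

end SimpleGraph

section Bipartition

variable {V : Type*} {G : SimpleGraph V} {P : Set V} {u v : V}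

theorem IsBipartition.isBipartiteWith (hP : IsBipartition G P) : G.IsBipartiteWith P Pᶜ where
  disjoint := disjoint_compl_right
  mem_of_adj u v h := by have := hP u v h; by_cases hu : u ∈ P <;> simp_all

theorem IsBipartition.connected [Nonempty V] (hP : IsBipartition G P)
    (hcommon : ∀ u v, (u ∈ P ↔ v ∈ P) → (G.commonNeighbors u v).Nonempty) : G.Connected := by
  have hsame : ∀ u v, (u ∈ P ↔ v ∈ P) → G.Reachable u v := fun u v h => by
    obtain ⟨w, hu, hv⟩ := hcommon u v h
    exact hu.reachable.trans hv.reachable.symm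
  refine ⟨fun u v => ?_⟩
  by_cases h : u ∈ P ↔ v ∈ P
  · exact hsame u v h
  · obtain ⟨w, hw, -⟩ := hcommon u u Iff.rfl
    exact hw.reachable.trans (hsame w v (by have := hP u w hw; tauto))

def oppositePart [Fintype V] (P : Set V) [DecidablePred (· ∈ P)] (u : V) : Finset V :=
  {v | ¬(v ∈ P ↔ u ∈ P)}

variable [Fintype V] [DecidablePred (· ∈ P)]

theorem IsBipartition.mem_oppositePart_of_adj (hP : IsBipartition G P) (h : G.Adj u v) :
    v ∈ oppositePart P u := by
  have := hP u v h
  simp only [oppositePart, mem_filter, mem_univ, true_and]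
  tauto

theorem oppositePart_eq_of_iff (h : u ∈ P ↔ v ∈ P) : oppositePart P u = oppositePart P v := by
  simp [oppositePart, h]

theorem IsBipartition.two_lt_edist_iff (hP : IsBipartition G P)
    (hcommon : ∀ u v, (u ∈ P ↔ v ∈ P) → (G.commonNeighbors u v).Nonempty) :
    2 < G.edist u v ↔ v ∈ oppositePart P u ∧ ¬G.Adj u v := by
  rw [SimpleGraph.two_lt_edist_iff]
  constructor
  · rintro ⟨-, hadj, hempty⟩
    refine ⟨?_, hadj⟩
    simp only [oppositePart, mem_filter, mem_univ, true_and]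
    exact fun h => (hcommon u v h.symm).ne_empty hempty
  · rintro ⟨hopp, hadj⟩
    refine ⟨by rintro rfl; simp [oppositePart] at hopp, hadj,
      Set.eq_empty_of_forall_notMem fun w hw => ?_⟩
    have hu := hP.mem_oppositePart_of_adj hw.1
    have hv := hP.mem_oppositePart_of_adj hw.2
    simp only [oppositePart, mem_filter, mem_univ, true_and] at hopp hu hv
    tauto

variable [DecidableRel G.Adj]

theorem IsBipartition.neighborFinset_subset_oppositePart (hP : IsBipartition G P) (u : V) :
    G.neighborFinset u ⊆ oppositePart P u := fun _ hv =>
  hP.mem_oppositePart_of_adj ((G.mem_neighborFinset _ _).1 hv)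

theorem IsBipartition.card_oppositePart {d n : ℕ} (hP : IsBipartition G P)
    (hreg : G.IsRegularOfDegree d) (hd : d ≠ 0) (hcard : Fintype.card V = 2 * n) (u : V) :
    #(oppositePart P u) = n := by
  have hsum := isBipartiteWith_sum_degrees_eq (show G.IsBipartiteWith ↑({v | v ∈ P} : Finset V)
    ↑({v | v ∉ P} : Finset V) by simpa [Set.compl_def] using hP.isBipartiteWith)
  simp only [hreg.degree_eq, sum_const, smul_eq_mul] at hsum
  have hparts := Nat.eq_of_mul_eq_mul_right (Nat.pos_of_ne_zero hd) hsum
  have hsplit := card_filter_add_card_filter_not (s := univ) (· ∈ P)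
  rw [card_univ, hcard] at hsplit
  by_cases hu : u ∈ P <;> simp only [oppositePart, hu, iff_true, iff_false, not_not] <;> omega

theorem IsBipartition.existsUnique_not_adj (hP : IsBipartition G P)
    (hu : #(oppositePart P u) = G.degree u + 1) :
    ∃! v, v ∈ oppositePart P u ∧ ¬G.Adj u v := by
  classical
  have hone : #(oppositePart P u \ G.neighborFinset u) = 1 := by
    rw [card_sdiff_of_subset (hP.neighborFinset_subset_oppositePart u), hu,
      card_neighborFinset_eq_degree]
    omega
  obtain ⟨v, hv⟩ := card_eq_one.1 hone
  simp only [Finset.ext_iff, mem_sdiff, mem_neighborFinset, mem_singleton] at hv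
  exact ⟨v, (hv v).2 rfl, fun w hw => (hv w).1 hw⟩

theorem IsBipartition.commonNeighbors_nonempty (hP : IsBipartition G P) (h : u ∈ P ↔ v ∈ P)
    (hdeg : #(oppositePart P u) < G.degree u + G.degree v) :
    (G.commonNeighbors u v).Nonempty := by
  classical
  have hv := hP.neighborFinset_subset_oppositePart v
  rw [← oppositePart_eq_of_iff h] at hv
  obtain ⟨w, hw⟩ := inter_nonempty_of_card_lt_card_add_card
    (hP.neighborFinset_subset_oppositePart u) hv (by simpa [card_neighborFinset_eq_degree])
  exact ⟨w, by simpa [mem_commonNeighbors] using hw⟩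

end Bipartition

theorem not_radioGraceful_of_bipartite_regular_n_sub_one
    {V : Type*} [Fintype V] (G : SimpleGraph V) [DecidableRel G.Adj]
    (n : ℕ) (hn : 3 ≤ n)
    (hbip : Bipartite G) (hreg : G.IsRegularOfDegree (n - 1))
    (hcard : Fintype.card V = 2 * n) :
    ¬ RadioGraceful G := by
  classical
  obtain ⟨P, hP⟩ := hbip
  intro hG
  have hopp := hP.card_oppositePart hreg (by omega) hcard
  have hcommon : ∀ u v, (u ∈ P ↔ v ∈ P) → (G.commonNeighbors u v).Nonempty := fun u v h =>
    hP.commonNeighbors_nonempty h (by rw [hopp, hreg.degree_eq, hreg.degree_eq]; omega)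
  have hantipode : ∀ u, ∃! v, v ∈ oppositePart P u ∧ ¬G.Adj u v := fun u =>
    hP.existsUnique_not_adj (by rw [hopp, hreg.degree_eq]; omega)
  have : Nonempty V := Fintype.card_pos_iff.1 (by omega)
  have hdiam : 2 < G.diam := by
    obtain ⟨v, hv, -⟩ := hantipode (Classical.arbitrary V)
    exact (hP.connected hcommon).lt_diam_of_lt_edist ((hP.two_lt_edist_iff hcommon).2 hv)
  obtain ⟨b, a, c, hac, ha, hc⟩ := hG.exists_two_far (by rw [Nat.card_eq_fintype_card]; omega)
  have far : ∀ {x}, G.diam ≤ G.dist b x → x ∈ oppositePart P b ∧ ¬G.Adj b x := fun h =>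
    (hP.two_lt_edist_iff hcommon).1 (lt_edist_of_lt_dist (hdiam.trans_le h))
  exact hac ((hantipode b).unique (far ha) (far hc))
end

section
/- Let q ≥ 2 and let 𝒫 be a finite projective plane of order q, with point set P and line set L (so |P| = |L| = q² + q + 1, every line is incident to q+1 points and every point is incident to q+1 lines). Then the incidence graph G_I of 𝒫, the bipartite graph on vertex set P ∪ L in which a point p and a line l are adjacent if and only if p is incident to l, is radio graceful. -/
open SimpleGraph

/-- The incidence graph of a point-line incidence structure: the bipartite graph
on `P ⊕ L` joining each point to the lines through it. -/
def incidenceGraph (P L : Type*) [Membership P L] : SimpleGraph (P ⊕ L) where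
  Adj x y :=
    match x, y with
    | Sum.inl p, Sum.inr l => p ∈ l
    | Sum.inr l, Sum.inl p => p ∈ l
    | _, _ => False
  symm := ⟨by rintro (p | l) (p' | l') h <;> exact h⟩
  loopless := ⟨by rintro (p | l) h <;> exact h⟩

/-!
The incidence graph of a projective plane is bipartite of diameter 3, so a bijective labelling
by `1, …, 2n` is a radio labelling as soon as consecutive labels sit on a non-incident
point–line pair and labels two apart sit on the same side. Labelling `p i` by `2i+1` and `l i`
by `2i+2`, it is enough to list the points and lines as a cyclic sequence
`p 0, l 0, p 1, l 1, …` in which consecutive terms are non-incident.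

For order `q ≥ 3` any listing of the points works: the line `l i` must avoid `p i` and
`p (i+1)`, and Hall's condition holds since `q² - q` lines avoid a given pair, at most four
lines meet two disjoint pairs, and no line meets more than `2q + 2` consecutive pairs.
For the Fano plane (`q = 2`) the cycle is written down by hand from a line `ℓ`, the quadrangle
`a, b, c, d` off `ℓ`, and the points where `ab`, `ac`, `ad` meet `ℓ`.
-/

open Configuration Configuration.ProjectivePlane Finset

theorem isRadioLabeling_of_diam_le_three {V : Type*} {G : SimpleGraph V} (hG : G.Connected)
    (hdiam : G.diam ≤ 3) {f : V → ℕ} (hf : Function.Injective f)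
    (h₁ : ∀ u v, f v = f u + 1 → 3 ≤ G.dist u v)
    (h₂ : ∀ u v, f v = f u + 2 → ¬G.Adj u v) : IsRadioLabeling G f := by
  intro u v huv
  wlog hlt : f u < f v generalizing u v
  · rw [abs_sub_comm, SimpleGraph.dist_comm]
    exact this v u huv.symm ((Nat.lt_or_gt_of_ne (hf.ne huv)).resolve_left hlt)
  have hpos : 0 < G.dist u v := (hG.preconnected u v).pos_dist_of_ne huv
  rw [abs_sub_comm, abs_of_nonneg (by omega)]
  obtain hgap | hgap | hgap : f v = f u + 1 ∨ f v = f u + 2 ∨ f u + 3 ≤ f v := by omega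
  · have := h₁ u v hgap
    omega
  · have : G.dist u v ≠ 1 := fun h => h₂ u v hgap (SimpleGraph.dist_eq_one_iff_adj.mp h)
    omega
  · omega

section IncidenceGraph

variable {P L : Type*} [Membership P L]

@[simp] lemma incidenceGraph_adj_inl_inr {p : P} {l : L} :
    (incidenceGraph P L).Adj (.inl p) (.inr l) ↔ p ∈ l := Iff.rfl

@[simp] lemma incidenceGraph_adj_inr_inl {p : P} {l : L} :
    (incidenceGraph P L).Adj (.inr l) (.inl p) ↔ p ∈ l := Iff.rfl

@[simp] lemma incidenceGraph_not_adj_inl_inl {p p' : P} :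
    ¬(incidenceGraph P L).Adj (.inl p) (.inl p') := id

@[simp] lemma incidenceGraph_not_adj_inr_inr {l l' : L} :
    ¬(incidenceGraph P L).Adj (.inr l) (.inr l') := id

lemma incidenceGraph_commonNeighbors_inl_inr (p : P) (l : L) :
    (incidenceGraph P L).commonNeighbors (.inl p) (.inr l) = ∅ := by
  ext (x | m) <;> simp [SimpleGraph.mem_commonNeighbors]

lemma incidenceGraph_edist_le_two_inl [HasLines P L] {p p' : P} (h : p ≠ p') :
    (incidenceGraph P L).edist (.inl p) (.inl p') ≤ 2 :=
  edist_le (.cons (incidenceGraph_adj_inl_inr.mpr (HasLines.mkLine_ax (L := L) h).1)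
    (.cons (incidenceGraph_adj_inr_inl.mpr (HasLines.mkLine_ax (L := L) h).2) .nil))

lemma incidenceGraph_edist_le_two_inr [HasPoints P L] {l l' : L} (h : l ≠ l') :
    (incidenceGraph P L).edist (.inr l) (.inr l') ≤ 2 :=
  edist_le (.cons (incidenceGraph_adj_inr_inl.mpr (HasPoints.mkPoint_ax h).1)
    (.cons (incidenceGraph_adj_inl_inr.mpr (HasPoints.mkPoint_ax h).2) .nil))

variable [ProjectivePlane P L]

lemma exists_point_mem_line (l : L) : ∃ p : P, p ∈ l := by
  obtain ⟨-, p₂, -, -, l₂, -, -, -, -, h₂₂, -⟩ := @exists_config P L _ _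
  by_cases h : l = l₂
  · exact ⟨p₂, h ▸ h₂₂⟩
  · exact ⟨HasPoints.mkPoint h, (HasPoints.mkPoint_ax h).1⟩

lemma incidenceGraph_edist_le_three_inl_inr (p : P) (l : L) :
    (incidenceGraph P L).edist (.inl p) (.inr l) ≤ 3 := by
  by_cases hpl : p ∈ l
  · exact (edist_eq_one_iff_adj.mpr hpl).trans_le (by norm_num)
  obtain ⟨z, hz⟩ := exists_point_mem_line (P := P) l
  calc (incidenceGraph P L).edist (.inl p) (.inr l)
      ≤ (incidenceGraph P L).edist (.inl p) (.inl z) +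
          (incidenceGraph P L).edist (.inl z) (.inr l) := SimpleGraph.edist_triangle
    _ ≤ 2 + 1 := add_le_add (incidenceGraph_edist_le_two_inl (ne_of_mem_of_not_mem hz hpl).symm)
        (edist_eq_one_iff_adj.mpr hz).le
    _ = 3 := by norm_num

lemma incidenceGraph_edist_le_three (u v : P ⊕ L) : (incidenceGraph P L).edist u v ≤ 3 := by
  have h23 : (2 : ℕ∞) ≤ 3 := by norm_num
  rcases u with p | l <;> rcases v with p' | l'
  · obtain rfl | h := eq_or_ne p p'
    · simp
    · exact (incidenceGraph_edist_le_two_inl h).trans h23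
  · exact incidenceGraph_edist_le_three_inl_inr p l'
  · rw [edist_comm]
    exact incidenceGraph_edist_le_three_inl_inr p' l
  · obtain rfl | h := eq_or_ne l l'
    · simp
    · exact (incidenceGraph_edist_le_two_inr h).trans h23

lemma incidenceGraph_connected : (incidenceGraph P L).Connected := by
  obtain ⟨p, -⟩ := @exists_config P L _ _
  have : Nonempty (P ⊕ L) := ⟨.inl p⟩
  exact connected_of_ediam_ne_top
    ((ediam_le_of_edist_le incidenceGraph_edist_le_three).trans_lt (by decide)).ne

lemma incidenceGraph_diam_le_three : (incidenceGraph P L).diam ≤ 3 :=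
  ENat.toNat_le_of_le_natCast (ediam_le_of_edist_le incidenceGraph_edist_le_three)

lemma incidenceGraph_three_le_dist {p : P} {l : L} (h : p ∉ l) :
    3 ≤ (incidenceGraph P L).dist (.inl p) (.inr l) := by
  have : 2 < (incidenceGraph P L).edist (.inl p) (.inr l) :=
    two_lt_edist_iff.mpr ⟨by simp, h, incidenceGraph_commonNeighbors_inl_inr p l⟩
  rw [← (incidenceGraph_connected.preconnected _ _).coe_dist_eq_edist] at this
  exact_mod_cast this

end IncidenceGraph

section AlternatingLabel

variable {α β : Type*} {n : ℕ} (p : Fin n ≃ α) (l : Fin n ≃ β)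

def alternatingLabel : α ⊕ β → ℕ :=
  Sum.elim (fun x => 2 * p.symm x + 1) (fun y => 2 * l.symm y + 2)

@[simp] lemma alternatingLabel_inl (x : α) : alternatingLabel p l (.inl x) = 2 * p.symm x + 1 :=
  rfl

@[simp] lemma alternatingLabel_inr (y : β) : alternatingLabel p l (.inr y) = 2 * l.symm y + 2 :=
  rfl

lemma alternatingLabel_injective : Function.Injective (alternatingLabel p l) := by
  rintro (x | y) (x' | y') h <;> simp only [alternatingLabel_inl, alternatingLabel_inr] at h
  · exact congrArg _ (p.symm.injective (Fin.ext (by omega)))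
  · omega
  · omega
  · exact congrArg _ (l.symm.injective (Fin.ext (by omega)))

lemma range_alternatingLabel : Set.range (alternatingLabel p l) = Set.Icc 1 (2 * n) := by
  ext k
  simp only [Set.mem_range, Set.mem_Icc]
  constructor
  · rintro ⟨x | y, rfl⟩
    · have := (p.symm x).isLt
      simp only [alternatingLabel_inl]
      omega
    · have := (l.symm y).isLt
      simp only [alternatingLabel_inr]
      omega
  · rintro ⟨hk₁, hk₂⟩
    obtain ⟨i, rfl | rfl⟩ := Nat.even_or_odd' k
    · refine ⟨.inr (l ⟨i - 1, by omega⟩), ?_⟩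
      simp only [alternatingLabel_inr, Equiv.symm_apply_apply]
      omega
    · exact ⟨.inl (p ⟨i, by omega⟩), by simp⟩

end AlternatingLabel

section AntiflagCycle

variable {P L : Type*} [Membership P L]

/-- The cyclic sequence `p 0, l 0, p 1, l 1, …, p (n-1), l (n-1), p 0` has no two consecutive
terms incident. -/
def IsAntiflagCycle {n : ℕ} [NeZero n] (p : Fin n → P) (l : Fin n → L) : Prop :=
  ∀ i, p i ∉ l i ∧ p (i + 1) ∉ l i

lemma IsAntiflagCycle.exists_equiv [Fintype P] [Fintype L] {n : ℕ} [NeZero n] {p : Fin n → P}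
    {l : Fin n → L} (h : IsAntiflagCycle p l) (hp : Function.Injective p)
    (hl : Function.Injective l) (hP : Fintype.card P = n) (hL : Fintype.card L = n) :
    ∃ (p' : Fin n ≃ P) (l' : Fin n ≃ L), IsAntiflagCycle p' l' :=
  ⟨.ofBijective p ((Fintype.bijective_iff_injective_and_card p).mpr ⟨hp, by simp [hP]⟩),
    .ofBijective l ((Fintype.bijective_iff_injective_and_card l).mpr ⟨hl, by simp [hL]⟩), h⟩

theorem radioGraceful_incidenceGraph_of_isAntiflagCycle [ProjectivePlane P L] {n : ℕ}
    [NeZero n] (p : Fin n ≃ P) (l : Fin n ≃ L) (h : IsAntiflagCycle p l) :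
    RadioGraceful (incidenceGraph P L) := by
  have hcard : Nat.card (P ⊕ L) = 2 * n := by
    rw [Nat.card_congr (p.symm.sumCongr l.symm), Nat.card_sum, Nat.card_eq_fintype_card,
      Fintype.card_fin, two_mul]
  refine ⟨alternatingLabel p l, isRadioLabeling_of_diam_le_three incidenceGraph_connected
    incidenceGraph_diam_le_three (alternatingLabel_injective p l) ?_ ?_,
    hcard ▸ range_alternatingLabel p l⟩
  · rintro (x | y) (x' | y') hgap <;>
      simp only [alternatingLabel_inl, alternatingLabel_inr] at hgap
    · omega
    · obtain ⟨i, rfl⟩ := p.surjective x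
      obtain ⟨j, rfl⟩ := l.surjective y'
      simp only [Equiv.symm_apply_apply] at hgap
      obtain rfl : j = i := Fin.ext (by omega)
      exact incidenceGraph_three_le_dist (h j).1
    · obtain ⟨i, rfl⟩ := l.surjective y
      obtain ⟨j, rfl⟩ := p.surjective x'
      simp only [Equiv.symm_apply_apply] at hgap
      obtain rfl : j = i + 1 := Fin.ext (by rw [Fin.val_add_one_of_lt' (by omega)]; omega)
      rw [SimpleGraph.dist_comm]
      exact incidenceGraph_three_le_dist (h i).2
    · omega
  · rintro (x | y) (x' | y') hgap <;>
      simp only [alternatingLabel_inl, alternatingLabel_inr] at hgap <;> first | omega | simp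

end AntiflagCycle

lemma exists_mem_ne_add_of_three_lt_card {G : Type*} [AddGroup G] [DecidableEq G]
    {S : Finset G} (hS : 3 < #S) (a : G) :
    ∃ i ∈ S, ∃ j ∈ S, j ≠ i ∧ j ≠ i + a ∧ j + a ≠ i := by
  obtain ⟨i, hi⟩ := card_pos.mp (by omega : 0 < #S)
  have : 0 < #(S \ {i - a, i, i + a}) :=
    (Nat.sub_pos_of_lt (card_le_three.trans_lt hS)).trans_le (le_card_sdiff _ _)
  obtain ⟨j, hj⟩ := card_pos.mp this
  simp only [mem_sdiff, mem_insert, mem_singleton, not_or] at hj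
  exact ⟨i, hi, j, hj.1, hj.2.2.1, hj.2.2.2, fun h => hj.2.1 (eq_sub_of_add_eq h)⟩

lemma notMem_of_mem_of_ne {P L : Type*} [Membership P L] [Nondegenerate P L] {x y : P}
    {m m' : L} (hxm : x ∈ m) (hym : y ∈ m) (hym' : y ∈ m') (hxy : x ≠ y) (hm : m ≠ m') :
    x ∉ m' :=
  fun hxm' => (Nondegenerate.eq_or_eq hxm hym hxm' hym').elim hxy hm

section Counting

open scoped Classical

variable {P L : Type*} [Membership P L]

lemma card_filter_mem_and_mem_le_one [Nondegenerate P L] [Fintype L] {x y : P} (hxy : x ≠ y) :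
    #{m : L | x ∈ m ∧ y ∈ m} ≤ 1 :=
  card_le_one.mpr fun m hm m' hm' => by
    simp only [mem_filter, mem_univ, true_and] at hm hm'
    exact (Nondegenerate.eq_or_eq hm.1 hm.2 hm'.1 hm'.2).resolve_left hxy

lemma card_lines_meeting_two_pairs_le_four [Nondegenerate P L] [Fintype L] {x y z w : P}
    (hxz : x ≠ z) (hxw : x ≠ w) (hyz : y ≠ z) (hyw : y ≠ w) :
    #{m : L | (x ∈ m ∨ y ∈ m) ∧ (z ∈ m ∨ w ∈ m)} ≤ 4 := by
  have hsub : ({m | (x ∈ m ∨ y ∈ m) ∧ (z ∈ m ∨ w ∈ m)} : Finset L) ⊆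
      ({m | x ∈ m ∧ z ∈ m} : Finset L) ∪ ({m | x ∈ m ∧ w ∈ m} : Finset L) ∪
        ({m | y ∈ m ∧ z ∈ m} : Finset L) ∪ ({m | y ∈ m ∧ w ∈ m} : Finset L) := by
    intro m
    simp only [mem_filter, mem_univ, true_and, mem_union]
    tauto
  grw [card_le_card hsub, card_union_le, card_union_le, card_union_le,
    card_filter_mem_and_mem_le_one hxz, card_filter_mem_and_mem_le_one hxw,
    card_filter_mem_and_mem_le_one hyz, card_filter_mem_and_mem_le_one hyw]

variable [ProjectivePlane P L] [Fintype P] [Fintype L]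

lemma card_filter_mem_lines (x : P) : #{m : L | x ∈ m} = order P L + 1 := by
  rw [← lineCount_eq L x, lineCount, Nat.card_eq_fintype_card, Fintype.card_subtype]

lemma card_filter_mem_points (m : L) : #{x : P | x ∈ m} = order P L + 1 := by
  rw [← pointCount_eq P m, pointCount, Nat.card_eq_fintype_card, Fintype.card_subtype]

lemma card_filter_equiv_mem {ι : Type*} [Fintype ι] (e : ι ≃ P) (m : L) :
    #{i | e i ∈ m} = order P L + 1 := by
  rw [← card_filter_mem_points m, ← Fintype.card_subtype, ← Fintype.card_subtype]
  exact Fintype.card_congr (e.subtypeEquiv fun _ => Iff.rfl)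

lemma card_filter_mem_or_mem {x y : P} (hxy : x ≠ y) :
    #{m : L | x ∈ m ∨ y ∈ m} = 2 * order P L + 1 := by
  obtain ⟨m, hm, huniq⟩ := HasLines.existsUnique_line P L x y hxy
  have hinter : ({m | x ∈ m} : Finset L) ∩ ({m | y ∈ m} : Finset L) = {m} := by
    ext m'
    simpa using ⟨fun h => huniq m' h, fun h => h ▸ hm⟩
  have := card_union_add_card_inter ({m | x ∈ m} : Finset L) ({m | y ∈ m} : Finset L)
  rw [card_filter_mem_lines, card_filter_mem_lines, hinter, card_singleton, ← filter_or] at this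
  omega

lemma card_filter_notMem_and_notMem {x y : P} (hxy : x ≠ y) :
    #{m : L | x ∉ m ∧ y ∉ m} = order P L ^ 2 - order P L := by
  have := card_filter_add_card_filter_not (s := (univ : Finset L)) (fun m => x ∈ m ∨ y ∈ m)
  simp only [not_or] at this
  rw [card_filter_mem_or_mem hxy, card_univ, card_lines P L] at this
  have : order P L ≤ order P L ^ 2 := Nat.le_self_pow two_ne_zero _
  omega

lemma card_filter_notMem (ℓ : L) : #{x : P | x ∉ ℓ} = order P L ^ 2 := by
  have := card_filter_add_card_filter_not (s := (univ : Finset P)) (· ∈ ℓ)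
  rw [card_filter_mem_points, card_univ, card_points P L] at this
  omega

lemma card_filter_mem_notMem_le_order {ℓ m : L} (hm : m ≠ ℓ) :
    #{x : P | x ∈ m ∧ x ∉ ℓ} ≤ order P L := by
  have hssub : ({x | x ∈ m ∧ x ∉ ℓ} : Finset P) ⊂ ({x | x ∈ m} : Finset P) :=
    (ssubset_iff_of_subset (monotone_filter_right _ fun _ _ => And.left)).mpr
      ⟨HasPoints.mkPoint hm, by simpa using (HasPoints.mkPoint_ax hm).1,
        by simp [(HasPoints.mkPoint_ax hm).2]⟩
  have := card_lt_card hssub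
  rw [card_filter_mem_points] at this
  omega

end Counting

section Hall

open scoped Classical

variable {P L : Type*} [Membership P L] [Fintype L] {n : ℕ} [NeZero n]

noncomputable def avoidingLines (p : Fin n → P) (i : Fin n) : Finset L :=
  {m | p i ∉ m ∧ p (i + 1) ∉ m}

lemma notMem_biUnion_avoidingLines {p : Fin n → P} {S : Finset (Fin n)} {m : L} :
    m ∉ S.biUnion (avoidingLines p) ↔ ∀ i ∈ S, p i ∈ m ∨ p (i + 1) ∈ m := by
  simp only [avoidingLines, mem_biUnion, mem_filter, mem_univ, true_and, not_exists, not_and,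
    or_iff_not_imp_left, not_not]

lemma card_compl_biUnion_avoidingLines_le_four [Nondegenerate P L] (p : Fin n ≃ P)
    {S : Finset (Fin n)} (hS : 3 < #S) : #(S.biUnion (avoidingLines (L := L) p))ᶜ ≤ 4 := by
  obtain ⟨i, hi, j, hj, hji, hji', hij⟩ := exists_mem_ne_add_of_three_lt_card hS 1
  refine (card_le_card fun m hm => ?_).trans (card_lines_meeting_two_pairs_le_four
    (p.injective.ne hji.symm) (p.injective.ne hij.symm) (p.injective.ne hji'.symm)
    (p.injective.ne ((add_left_injective 1).ne hji.symm)))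
  rw [mem_compl, notMem_biUnion_avoidingLines] at hm
  simpa using ⟨hm i hi, hm j hj⟩

variable [ProjectivePlane P L] [Fintype P]

lemma card_filter_mem_or_add_one_mem_le (p : Fin n ≃ P) (m : L) :
    #{i | p i ∈ m ∨ p (i + 1) ∈ m} ≤ 2 * order P L + 2 := by
  rw [filter_or]
  refine (card_union_le _ _).trans ?_
  -- `i ↦ p (i + 1)` is again an enumeration of the points
  change #{i | p i ∈ m} + #{i | ((Equiv.addRight 1).trans p) i ∈ m} ≤ _
  rw [card_filter_equiv_mem, card_filter_equiv_mem]
  omega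

lemma biUnion_avoidingLines_eq_univ (p : Fin n ≃ P) {S : Finset (Fin n)}
    (hS : 2 * order P L + 2 < #S) : S.biUnion (avoidingLines p) = (univ : Finset L) :=
  eq_univ_of_forall fun m => by
    by_contra hm
    rw [notMem_biUnion_avoidingLines] at hm
    have := (card_le_card fun i hi => by simpa using hm i hi).trans
      (card_filter_mem_or_add_one_mem_le p m)
    omega

lemma card_le_card_biUnion_avoidingLines (hq : 3 ≤ order P L) (p : Fin n ≃ P)
    (S : Finset (Fin n)) : #S ≤ #(S.biUnion (avoidingLines (L := L) p)) := by
  have hcard : Fintype.card L = n := by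
    rw [← card_points_eq_card_lines P L, Fintype.card_congr p.symm, Fintype.card_fin]
  have hn : n = order P L ^ 2 + order P L + 1 := by rw [← hcard, card_lines]
  have hq2 : 3 * order P L ≤ order P L ^ 2 := by nlinarith
  rcases le_or_gt #S 3 with hS | hS
  · obtain rfl | ⟨i, hi⟩ := S.eq_empty_or_nonempty
    · simp
    have hne : p i ≠ p (i + 1) := p.injective.ne (by simpa using (by omega : n ≠ 1))
    calc #S ≤ order P L ^ 2 - order P L := by omega
      _ = #(avoidingLines (L := L) p i) := (card_filter_notMem_and_notMem hne).symm
      _ ≤ _ := card_le_card (subset_biUnion_of_mem _ hi)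
  rcases le_or_gt #S (2 * order P L + 2) with hS' | hS'
  · have := card_add_card_compl (S.biUnion (avoidingLines (L := L) p))
    have := card_compl_biUnion_avoidingLines_le_four (L := L) p hS
    omega
  · rw [biUnion_avoidingLines_eq_univ p hS', card_univ, hcard]
    exact (card_le_univ S).trans_eq (Fintype.card_fin n)

theorem exists_isAntiflagCycle_of_three_le_order (hq : 3 ≤ order P L) (p : Fin n ≃ P) :
    ∃ l : Fin n ≃ L, IsAntiflagCycle p l := by
  obtain ⟨σ, hσ, hmem⟩ := (all_card_le_biUnion_card_iff_exists_injective _).mp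
    (card_le_card_biUnion_avoidingLines hq p)
  have hcard : Fintype.card (Fin n) = Fintype.card L := by
    rw [← card_points_eq_card_lines P L, Fintype.card_congr p]
  refine ⟨.ofBijective σ ((Fintype.bijective_iff_injective_and_card σ).mpr ⟨hσ, hcard⟩),
    fun i => ?_⟩
  simpa [avoidingLines] using hmem i

end Hall

section OrderTwo

open scoped Classical

variable {P L : Type*} [Membership P L] [ProjectivePlane P L] [Fintype P] [Fintype L]

lemma notMem_of_order_eq_two (h : order P L = 2) {ℓ m : L} {a b c : P} (hab : a ≠ b)
    (hac : a ≠ c) (hbc : b ≠ c) (ha : a ∉ ℓ) (hb : b ∉ ℓ) (hc : c ∉ ℓ) (ham : a ∈ m)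
    (hbm : b ∈ m) : c ∉ m := by
  intro hcm
  have hsub : ({a, b, c} : Finset P) ⊆ ({x | x ∈ m ∧ x ∉ ℓ} : Finset P) := by
    intro x hx
    simp only [mem_insert, mem_singleton] at hx
    rcases hx with rfl | rfl | rfl <;> simp [*]
  have := (card_le_card hsub).trans
    (card_filter_mem_notMem_le_order (ne_of_mem_of_not_mem' ham ha))
  rw [card_eq_three.mpr ⟨a, b, c, hab, hac, hbc, rfl⟩, h] at this
  omega

theorem exists_isAntiflagCycle_of_quadrangle (h : order P L = 2) {ℓ : L} {a b c d : P}
    (hab : a ≠ b) (hac : a ≠ c) (had : a ≠ d) (hbc : b ≠ c) (hbd : b ≠ d) (hcd : c ≠ d)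
    (ha : a ∉ ℓ) (hb : b ∉ ℓ) (hc : c ∉ ℓ) (hd : d ∉ ℓ) :
    ∃ (p : Fin 7 ≃ P) (l : Fin 7 ≃ L), IsAntiflagCycle p l := by
  obtain ⟨ab, ha_ab, hb_ab⟩ := (HasLines.existsUnique_line P L a b hab).exists
  obtain ⟨ac, ha_ac, hc_ac⟩ := (HasLines.existsUnique_line P L a c hac).exists
  obtain ⟨ad, ha_ad, hd_ad⟩ := (HasLines.existsUnique_line P L a d had).exists
  obtain ⟨bc, hb_bc, hc_bc⟩ := (HasLines.existsUnique_line P L b c hbc).exists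
  obtain ⟨bd, hb_bd, hd_bd⟩ := (HasLines.existsUnique_line P L b d hbd).exists
  obtain ⟨cd, hc_cd, hd_cd⟩ := (HasLines.existsUnique_line P L c d hcd).exists
  have hc_ab : c ∉ ab := notMem_of_order_eq_two h hab hac hbc ha hb hc ha_ab hb_ab
  have hd_ab : d ∉ ab := notMem_of_order_eq_two h hab had hbd ha hb hd ha_ab hb_ab
  have hd_ac : d ∉ ac := notMem_of_order_eq_two h hac had hcd ha hc hd ha_ac hc_ac
  have hb_ad : b ∉ ad := notMem_of_order_eq_two h had hab hbd.symm ha hd hb ha_ad hd_ad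
  have hc_ad : c ∉ ad := notMem_of_order_eq_two h had hac hcd.symm ha hd hc ha_ad hd_ad
  have ha_bc : a ∉ bc := notMem_of_order_eq_two h hbc hab.symm hac.symm hb hc ha hb_bc hc_bc
  have ha_bd : a ∉ bd := notMem_of_order_eq_two h hbd hab.symm had.symm hb hd ha hb_bd hd_bd
  have hc_bd : c ∉ bd := notMem_of_order_eq_two h hbd hbc hcd.symm hb hd hc hb_bd hd_bd
  have ha_cd : a ∉ cd := notMem_of_order_eq_two h hcd hac.symm had.symm hc hd ha hc_cd hd_cd
  have hb_cd : b ∉ cd := notMem_of_order_eq_two h hcd hbc.symm hbd.symm hc hd hb hc_cd hd_cd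
  have meet_ℓ : ∀ m : L, m ≠ ℓ → ∃ x : P, x ∈ m ∧ x ∈ ℓ := fun m hm =>
    (HasPoints.existsUnique_point P L m ℓ hm).exists
  obtain ⟨X, hX_ab, hX⟩ := meet_ℓ ab (ne_of_mem_of_not_mem' ha_ab ha)
  obtain ⟨Y, hY_ac, hY⟩ := meet_ℓ ac (ne_of_mem_of_not_mem' ha_ac ha)
  obtain ⟨Z, hZ_ad, hZ⟩ := meet_ℓ ad (ne_of_mem_of_not_mem' ha_ad ha)
  have hX_ac : X ∉ ac := notMem_of_mem_of_ne hX_ab ha_ab ha_ac (ne_of_mem_of_not_mem hX ha)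
    (ne_of_mem_of_not_mem' hc_ac hc_ab).symm
  have hX_bc : X ∉ bc := notMem_of_mem_of_ne hX_ab hb_ab hb_bc (ne_of_mem_of_not_mem hX hb)
    (ne_of_mem_of_not_mem' ha_ab ha_bc)
  have hY_ab : Y ∉ ab := notMem_of_mem_of_ne hY_ac ha_ac ha_ab (ne_of_mem_of_not_mem hY ha)
    (ne_of_mem_of_not_mem' hc_ac hc_ab)
  have hY_bc : Y ∉ bc := notMem_of_mem_of_ne hY_ac hc_ac hc_bc (ne_of_mem_of_not_mem hY hc)
    (ne_of_mem_of_not_mem' ha_ac ha_bc)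
  have hZ_ab : Z ∉ ab := notMem_of_mem_of_ne hZ_ad ha_ad ha_ab (ne_of_mem_of_not_mem hZ ha)
    (ne_of_mem_of_not_mem' hd_ad hd_ab)
  have hZ_ac : Z ∉ ac := notMem_of_mem_of_ne hZ_ad ha_ad ha_ac (ne_of_mem_of_not_mem hZ ha)
    (ne_of_mem_of_not_mem' hd_ad hd_ac)
  have hZ_bd : Z ∉ bd := notMem_of_mem_of_ne hZ_ad hd_ad hd_bd (ne_of_mem_of_not_mem hZ hd)
    (ne_of_mem_of_not_mem' ha_ad ha_bd)
  have hp : Function.Injective ![a, b, c, d, X, Y, Z] := by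
    intro i j hij
    fin_cases i <;> fin_cases j <;> simp at hij ⊢ <;> grind
  have hl : Function.Injective ![cd, ad, ℓ, ac, bc, ab, bd] := by
    intro i j hij
    fin_cases i <;> fin_cases j <;> simp at hij ⊢ <;> grind
  refine IsAntiflagCycle.exists_equiv (fun i => ?_) hp hl (by simp [card_points P L, h])
    (by simp [card_lines P L, h])
  fin_cases i
  · exact ⟨ha_cd, hb_cd⟩
  · exact ⟨hb_ad, hc_ad⟩
  · exact ⟨hc, hd⟩
  · exact ⟨hd_ac, hX_ac⟩
  · exact ⟨hX_bc, hY_bc⟩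
  · exact ⟨hY_ab, hZ_ab⟩
  · exact ⟨hZ_bd, ha_bd⟩

theorem exists_isAntiflagCycle_of_order_eq_two (h : order P L = 2) :
    ∃ (p : Fin 7 ≃ P) (l : Fin 7 ≃ L), IsAntiflagCycle p l := by
  obtain ⟨-, -, -, ℓ, -⟩ := @exists_config P L _ _
  obtain ⟨a, b, c, d, hab, hac, had, hbc, hbd, hcd, hset⟩ :=
    card_eq_four.mp ((card_filter_notMem ℓ).trans (by rw [h]; rfl))
  have hoff : ∀ x ∈ ({a, b, c, d} : Finset P), x ∉ ℓ := fun x hx => by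
    simpa [← hset] using hx
  simp only [mem_insert, mem_singleton, forall_eq_or_imp, forall_eq] at hoff
  exact exists_isAntiflagCycle_of_quadrangle h hab hac had hbc hbd hcd hoff.1 hoff.2.1
    hoff.2.2.1 hoff.2.2.2

end OrderTwo

theorem radioGraceful_incidenceGraph_projectivePlane_general
    (P L : Type*) [Fintype P] [Fintype L] [Membership P L]
    [Configuration.ProjectivePlane P L] :
    RadioGraceful (incidenceGraph P L) := by
  obtain h | h : order P L = 2 ∨ 3 ≤ order P L := by have := one_lt_order P L; omega
  · obtain ⟨p, l, hpl⟩ := exists_isAntiflagCycle_of_order_eq_two h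
    exact radioGraceful_incidenceGraph_of_isAntiflagCycle p l hpl
  · have : NeZero (Fintype.card P) := ⟨by rw [card_points P L]; omega⟩
    obtain ⟨l, hpl⟩ := exists_isAntiflagCycle_of_three_le_order h (Fintype.equivFin P).symm
    exact radioGraceful_incidenceGraph_of_isAntiflagCycle _ l hpl

theorem radioGraceful_incidenceGraph_projectivePlane
    (P L : Type*) [Fintype P] [Fintype L] [Membership P L]
    [Configuration.ProjectivePlane P L]
    (q : ℕ) (hq : 2 ≤ q)
    (horder : Configuration.ProjectivePlane.order P L = q) :
    RadioGraceful (incidenceGraph P L) :=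
  radioGraceful_incidenceGraph_projectivePlane_general P L
end

section
/- Let q ≥ 2 and let G be a finite connected bipartite (q+1)-regular simple graph of girth 8 on 2(q+1)(q²+1) vertices (i.e., a (q+1,8)-cage, the incidence graph of a generalized quadrangle of order q). Then G is not radio graceful. -/
open SimpleGraph

/-!
Around any vertex, bipartiteness and girth 8 force the distance levels 1, 2, 3 to have
exactly `q + 1`, `(q + 1) q` and `(q + 1) q²` vertices, and double counting the edges from
level 3 up gives at least `q³` vertices at distance 4. These already add up to `2 (q + 1) (q² + 1) = |V|`, so the
diameter is 4. In a radio labeling, vertices with consecutive labels must then be at distance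
exactly 4, an even number, hence on the same side of the bipartition; a graceful labeling would
thus put every vertex on one side, which an edge forbids.
-/

open Finset

namespace IsBipartition

variable {V : Type*} {G : SimpleGraph V} {P : Set V}

theorem mem_iff_mem_iff_even_length (hP : IsBipartition G P) {u w : V} (p : G.Walk u w) :
    (u ∈ P ↔ w ∈ P) ↔ Even p.length := by
  induction p with
  | nil => simp
  | cons h p ih =>
    rw [Walk.length_cons, Nat.even_add_one, ← ih]
    have := hP _ _ h
    tauto

theorem mem_iff_mem_iff_even_dist (hP : IsBipartition G P) {u w : V} (h : G.Reachable u w) :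
    (u ∈ P ↔ w ∈ P) ↔ Even (G.dist u w) := by
  obtain ⟨p, hp⟩ := h.exists_walk_length_eq_dist
  rw [← hp, hP.mem_iff_mem_iff_even_length]

theorem dist_eq_add_one_or (hP : IsBipartition G P) {v u w : V} (hr : G.Reachable v u)
    (h : G.Adj u w) : G.dist v w = G.dist v u + 1 ∨ G.dist v u = G.dist v w + 1 := by
  have hpar : ¬ (Even (G.dist v u) ↔ Even (G.dist v w)) := by
    rw [← hP.mem_iff_mem_iff_even_dist hr,
      ← hP.mem_iff_mem_iff_even_dist (hr.trans h.reachable)]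
    have := hP u w h
    tauto
  simp only [Nat.even_iff] at hpar
  rcases h.diff_dist_adj (u := v) with h' | h' | h' <;> omega

end IsBipartition

namespace IsRadioLabeling

variable {V : Type*} {G : SimpleGraph V} {f : V → ℕ}

theorem injective (hf : IsRadioLabeling G f) (hG : G.ediam ≠ ⊤) : Function.Injective f := by
  intro u w huw
  by_contra hne
  have := hf u w hne
  have := G.dist_le_diam hG (u := u) (v := w)
  rw [huw, sub_self, abs_zero] at *
  omega

theorem dist_eq_diam (hf : IsRadioLabeling G f) (hG : G.ediam ≠ ⊤) {u w : V}
    (h : f w = f u + 1) : G.dist u w = G.diam := by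
  have hne : u ≠ w := by rintro rfl; omega
  have hlab := hf u w hne
  have := G.dist_le_diam hG (u := u) (v := w)
  rw [h, Nat.cast_add, Nat.cast_one, sub_add_cancel_left, abs_neg, abs_one] at hlab
  omega

end IsRadioLabeling

section Radio

variable {V : Type*} {G : SimpleGraph V}

theorem not_radioGraceful_of_even_diam (hbip : Bipartite G) (heven : Even G.diam)
    (hdiam : G.diam ≠ 0) : ¬ RadioGraceful G := by
  rintro ⟨f, hf, hrange⟩
  obtain ⟨P, hP⟩ := hbip
  have hG : G.ediam ≠ ⊤ := ediam_ne_top_of_diam_ne_zero hdiam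
  have : Nontrivial V := nontrivial_of_diam_ne_zero hdiam
  have hconn : G.Connected := connected_of_ediam_ne_top hG
  have hmem (x : V) : f x ∈ Set.Icc 1 (Nat.card V) := hrange ▸ Set.mem_range_self x
  obtain ⟨u, w, hadj⟩ : ∃ u w, G.Adj u w :=
    ⟨_, hconn.preconnected.exists_adj_of_nontrivial (Classical.arbitrary V)⟩
  obtain ⟨x₀, hx₀⟩ : 1 ∈ Set.range f :=
    hrange ▸ ⟨le_rfl, (hmem u).1.trans (hmem u).2⟩
  have hside (k : ℕ) : ∀ x, f x = k + 1 → (x ∈ P ↔ x₀ ∈ P) := by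
    induction k with
    | zero => intro x hx; rw [hf.injective hG (hx.trans hx₀.symm)]
    | succ k ih =>
      intro x hx
      obtain ⟨y, hy⟩ : k + 1 ∈ Set.range f :=
        hrange ▸ ⟨by omega, by have := (hmem x).2; omega⟩
      rw [← ih y hy, iff_comm, hP.mem_iff_mem_iff_even_dist (hconn y x),
        hf.dist_eq_diam hG (by omega)]
      exact heven
  have hu := hside (f u - 1) u (by have := (hmem u).1; omega)
  have hw := hside (f w - 1) w (by have := (hmem w).1; omega)
  have := hP u w hadj
  tauto

end Radio

namespace SimpleGraph

variable {V : Type*} {G : SimpleGraph V}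

theorem egirth_le_four {a b c d : V} (hab : G.Adj a b) (hbc : G.Adj b c) (hcd : G.Adj c d)
    (hda : G.Adj d a) (hac : a ≠ c) (hbd : b ≠ d) : G.egirth ≤ 4 := by
  have : (Walk.cons hab (Walk.cons hbc (Walk.cons hcd (Walk.cons hda Walk.nil)))).IsCycle := by
    have := hab.ne; have := hbc.ne; have := hcd.ne; have := hda.ne
    simp [Walk.isCycle_def, Walk.isTrail_def, Sym2.eq, Sym2.rel_iff']
    aesop
  exact (egirth_le_length this).trans_eq rfl

theorem egirth_le_six {a b c d e f : V} (hab : G.Adj a b) (hbc : G.Adj b c) (hcd : G.Adj c d)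
    (hde : G.Adj d e) (hef : G.Adj e f) (hfa : G.Adj f a)
    (hac : a ≠ c) (had : a ≠ d) (hae : a ≠ e) (hbd : b ≠ d) (hbe : b ≠ e) (hbf : b ≠ f)
    (hce : c ≠ e) (hcf : c ≠ f) (hdf : d ≠ f) : G.egirth ≤ 6 := by
  have : (Walk.cons hab (Walk.cons hbc (Walk.cons hcd (Walk.cons hde (Walk.cons hef
      (Walk.cons hfa Walk.nil)))))).IsCycle := by
    have := hab.ne; have := hbc.ne; have := hcd.ne; have := hde.ne; have := hef.ne
    have := hfa.ne
    simp [Walk.isCycle_def, Walk.isTrail_def, Sym2.eq, Sym2.rel_iff']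
    aesop
  exact (egirth_le_length this).trans_eq rfl

theorem exists_adj_dist_eq {v u : V} {k : ℕ} (hu : G.dist v u = k + 1) :
    ∃ w, G.Adj u w ∧ G.dist v w = k := by
  obtain ⟨p, hp⟩ := exists_walk_of_dist_ne_zero (u := u) (v := v) (by rw [dist_comm, hu]; omega)
  cases p with
  | nil => simp at hu
  | cons hadj p =>
    refine ⟨_, hadj, ?_⟩
    have := G.dist_le p.reverse
    rw [Walk.length_reverse] at this
    rw [Walk.length_cons, dist_comm] at hp
    rcases hadj.diff_dist_adj (u := v) with h | h | h <;> omega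

-- Two distinct shortest paths from `v` to a vertex at distance at most `3` close a cycle of
-- length at most `6`.
theorem eq_of_adj_of_dist_eq (hg : 6 < G.egirth) {v u w₁ w₂ : V} {k : ℕ} (hk : k ≤ 2)
    (hu : G.dist v u = k + 1) (h₁ : G.Adj u w₁) (h₂ : G.Adj u w₂)
    (hd₁ : G.dist v w₁ = k) (hd₂ : G.dist v w₂ = k) : w₁ = w₂ := by
  have hne_of_dist {a b : V} (h : G.dist v a ≠ G.dist v b) : a ≠ b := by rintro rfl; exact h rfl
  have hvu : v ≠ u := hne_of_dist (by rw [dist_self]; omega)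
  by_contra hne
  interval_cases k
  · have hr : G.Reachable v u := Reachable.of_dist_ne_zero (by omega)
    rw [(hr.trans h₁.reachable).dist_eq_zero_iff] at hd₁
    rw [(hr.trans h₂.reachable).dist_eq_zero_iff] at hd₂
    exact hne (hd₁.symm.trans hd₂)
  · have := egirth_le_four (dist_eq_one_iff_adj.mp hd₁) h₁.symm h₂
      (dist_eq_one_iff_adj.mp hd₂).symm hvu hne
    exact absurd (hg.trans_le this) (by decide)
  · obtain ⟨x₁, hx₁, hdx₁⟩ := exists_adj_dist_eq hd₁
    obtain ⟨x₂, hx₂, hdx₂⟩ := exists_adj_dist_eq hd₂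
    by_cases hx : x₁ = x₂
    · subst hx
      have := egirth_le_four hx₁.symm h₁.symm h₂ hx₂ (hne_of_dist (by omega)) hne
      exact absurd (hg.trans_le this) (by decide)
    · have := egirth_le_six (dist_eq_one_iff_adj.mp hdx₁) hx₁.symm h₁.symm h₂ hx₂
        (dist_eq_one_iff_adj.mp hdx₂).symm (hne_of_dist (by rw [dist_self]; omega)) hvu
        (hne_of_dist (by rw [dist_self]; omega)) (hne_of_dist (by omega))
        (hne_of_dist (by omega)) hx hne (hne_of_dist (by omega)) (hne_of_dist (by omega))
      exact absurd (hg.trans_le this) (by decide)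

section Sphere

variable [Fintype V]

noncomputable def sphere (G : SimpleGraph V) (v : V) (k : ℕ) : Finset V := {u | G.dist v u = k}

@[simp]
theorem mem_sphere {v u : V} {k : ℕ} : u ∈ G.sphere v k ↔ G.dist v u = k := by
  simp [sphere]

theorem pairwiseDisjoint_sphere (v : V) (s : Set ℕ) : s.PairwiseDisjoint (G.sphere v) :=
  fun _ _ _ _ hij ↦ Finset.disjoint_left.2 fun _ hi hj ↦
    hij ((mem_sphere.1 hi).symm.trans (mem_sphere.1 hj))

variable [DecidableRel G.Adj] {P : Set V} {q : ℕ}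

theorem card_sphere_one (hreg : G.IsRegularOfDegree q) (v : V) : #(G.sphere v 1) = q := by
  rw [← hreg v, ← card_neighborFinset_eq_degree]
  congr 1
  ext
  simp

theorem card_bipartiteBelow_sphere (hg : 6 < G.egirth) {v u : V} {k : ℕ} (hk : k ≤ 2)
    (hu : u ∈ G.sphere v (k + 1)) : #((G.sphere v k).bipartiteBelow G.Adj u) = 1 := by
  rw [mem_sphere] at hu
  obtain ⟨w, hw, hdw⟩ := exists_adj_dist_eq hu
  rw [card_eq_one]
  refine ⟨w, eq_singleton_iff_unique_mem.2 ⟨by simp [hdw, hw.symm], fun x hx ↦ ?_⟩⟩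
  rw [mem_bipartiteBelow, mem_sphere] at hx
  exact eq_of_adj_of_dist_eq hg hk hu hx.2.symm hw hx.1 hdw

-- The neighbours of `u` lie one level below or one level above it; exactly one lies below.
theorem card_bipartiteAbove_sphere (hP : IsBipartition G P) (hreg : G.IsRegularOfDegree (q + 1))
    (hg : 6 < G.egirth) {v u : V} {k : ℕ} (hk : k ≤ 2) (hu : u ∈ G.sphere v (k + 1)) :
    #((G.sphere v (k + 2)).bipartiteAbove G.Adj u) = q := by
  have hbelow := card_bipartiteBelow_sphere hg hk hu
  rw [mem_sphere] at hu
  have hr : G.Reachable v u := Reachable.of_dist_ne_zero (by omega)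
  have habove : (G.sphere v (k + 2)).bipartiteAbove G.Adj u =
      {w ∈ G.neighborFinset u | G.dist v w = k + 2} := by
    ext
    simp [and_comm]
  have hbelow' : (G.sphere v k).bipartiteBelow G.Adj u =
      {w ∈ G.neighborFinset u | ¬ G.dist v w = k + 2} := by
    ext w
    simp only [mem_bipartiteBelow, mem_sphere, mem_filter, mem_neighborFinset]
    constructor
    · rintro ⟨hd, hadj⟩
      exact ⟨hadj.symm, by omega⟩
    · rintro ⟨hadj, hd⟩
      have := hP.dist_eq_add_one_or hr hadj
      exact ⟨by omega, hadj.symm⟩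
  have := card_filter_add_card_filter_not (s := G.neighborFinset u)
    (fun w ↦ G.dist v w = k + 2)
  rw [← habove, ← hbelow', hbelow, card_neighborFinset_eq_degree, hreg u] at this
  omega

theorem card_sphere_add_two (hP : IsBipartition G P) (hreg : G.IsRegularOfDegree (q + 1))
    (hg : 6 < G.egirth) {k : ℕ} (hk : k ≤ 1) (v : V) :
    #(G.sphere v (k + 2)) = #(G.sphere v (k + 1)) * q := by
  have := card_mul_eq_card_mul G.Adj (s := G.sphere v (k + 1)) (t := G.sphere v (k + 2))
    (fun u hu ↦ card_bipartiteAbove_sphere hP hreg hg (by omega) hu)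
    (fun u hu ↦ card_bipartiteBelow_sphere hg (k := k + 1) (by omega) hu)
  rw [this, mul_one]

theorem card_sphere_two (hP : IsBipartition G P) (hreg : G.IsRegularOfDegree (q + 1))
    (hg : 6 < G.egirth) (v : V) : #(G.sphere v 2) = (q + 1) * q := by
  rw [card_sphere_add_two hP hreg hg (k := 0) zero_le_one, card_sphere_one hreg]

theorem card_sphere_three (hP : IsBipartition G P) (hreg : G.IsRegularOfDegree (q + 1))
    (hg : 6 < G.egirth) (v : V) : #(G.sphere v 3) = (q + 1) * q * q := by
  rw [card_sphere_add_two hP hreg hg (k := 1) le_rfl, card_sphere_two hP hreg hg]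

theorem pow_three_le_card_sphere_four (hP : IsBipartition G P)
    (hreg : G.IsRegularOfDegree (q + 1)) (hg : 6 < G.egirth) (v : V) :
    q ^ 3 ≤ #(G.sphere v 4) := by
  have hle := card_mul_le_card_mul G.Adj (s := G.sphere v 3) (t := G.sphere v 4) (n := q + 1)
    (fun u hu ↦ (card_bipartiteAbove_sphere hP hreg hg (k := 2) le_rfl hu).ge)
    (fun w _ ↦ by
      rw [← hreg w, ← card_neighborFinset_eq_degree]
      exact card_le_card fun x hx ↦ by simpa [adj_comm] using ((mem_bipartiteBelow _).1 hx).2)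
  rw [card_sphere_three hP hreg hg] at hle
  exact le_of_mul_le_mul_right (by nlinarith) (Nat.succ_pos q)

theorem dist_le_four (hP : IsBipartition G P) (hreg : G.IsRegularOfDegree (q + 1))
    (hg : 6 < G.egirth) (hcard : Fintype.card V ≤ 2 * (q + 1) * (q ^ 2 + 1)) (v u : V) :
    G.dist v u ≤ 4 := by
  classical
  have hcover : (range 5).biUnion (G.sphere v) = univ := by
    refine eq_univ_of_card _ ((card_le_univ _).antisymm (hcard.trans ?_))
    have h0 : 1 ≤ #(G.sphere v 0) := card_pos.2 ⟨v, by simp⟩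
    have h4 := pow_three_le_card_sphere_four hP hreg hg v
    rw [card_biUnion (pairwiseDisjoint_sphere v _)]
    simp only [sum_range_succ, sum_range_zero, card_sphere_one hreg, card_sphere_two hP hreg hg,
      card_sphere_three hP hreg hg]
    nlinarith
  have hu : u ∈ (range 5).biUnion (G.sphere v) := hcover ▸ mem_univ u
  simp only [mem_biUnion, mem_range, mem_sphere] at hu
  omega

theorem Connected.diam_eq_four (hconn : G.Connected) (hP : IsBipartition G P)
    (hreg : G.IsRegularOfDegree (q + 1)) (hg : 6 < G.egirth) (hq : 0 < q)
    (hcard : Fintype.card V ≤ 2 * (q + 1) * (q ^ 2 + 1)) : G.diam = 4 := by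
  have : Nonempty V := hconn.nonempty
  obtain ⟨u, hu⟩ := card_pos.1 ((pow_pos hq 3).trans_le
    (pow_three_le_card_sphere_four hP hreg hg (Classical.arbitrary V)))
  obtain ⟨a, b, hab⟩ := G.exists_dist_eq_diam
  refine le_antisymm (hab ▸ dist_le_four hP hreg hg hcard a b) ?_
  rw [← mem_sphere.1 hu]
  exact dist_le_diam (connected_iff_ediam_ne_top.1 hconn)

end Sphere

end SimpleGraph

theorem not_radioGraceful_quadrangle_cage
    {V : Type*} [Fintype V] (G : SimpleGraph V) [DecidableRel G.Adj]
    (q : ℕ) (hq : 2 ≤ q)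
    (hconn : G.Connected) (hbip : Bipartite G)
    (hreg : G.IsRegularOfDegree (q + 1)) (hgirth : G.girth = 8)
    (hcard : Fintype.card V = 2 * (q + 1) * (q ^ 2 + 1)) :
    ¬ RadioGraceful G := by
  obtain ⟨P, hP⟩ := id hbip
  have hegirth : G.egirth = 8 := (ENat.toNat_eq_iff (by norm_num)).mp hgirth
  have hdiam : G.diam = 4 :=
    hconn.diam_eq_four hP hreg (by rw [hegirth]; decide) (by omega) hcard.le
  exact not_radioGraceful_of_even_diam hbip (by rw [hdiam]; decide) (by rw [hdiam]; decide)
end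

section
/- Let ℓ ≥ 1 and let G be a finite simple graph on n ≥ 2ℓ + 1 vertices whose minimum degree satisfies δ(G) ≥ ((4ℓ - 1)/(4ℓ)) · n. Then G contains the ℓ-th power of a Hamiltonian cycle. -/
/-!
The complement of `G` has maximum degree `b = n - 1 - δ(G)`, and the degree condition says
`4ℓ(b + 1) ≤ n`; the `ℓ`-th power of the `n`-cycle has maximum degree `2ℓ`. Place the cycle power
on the vertices of `G` by a bijection with the fewest edges landing on non-edges of `G`. If some
edge `ix` still does, all but at most `2ℓ(2b + 1) < n` positions `j` are such that swapping `i`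
and `j` repairs every edge at `i` and at `j` without breaking any other, contradicting minimality.
This is a weak form of the Sauer–Spencer packing theorem.
-/

open SimpleGraph

/-- `G` contains the `l`-th power of a Hamiltonian cycle: there is a cyclic
ordering of all vertices in which vertices at cyclic distance at most `l`
are adjacent. -/
def ContainsPowHamCycle {V : Type*} (G : SimpleGraph V) (l : ℕ) : Prop :=
  ∃ e : ZMod (Nat.card V) ≃ V,
    ∀ (i : ZMod (Nat.card V)) (k : ℕ), 1 ≤ k → k ≤ l →
      G.Adj (e i) (e (i + (k : ZMod (Nat.card V))))

open Finset

namespace SimpleGraph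

def Packs {P V : Type*} (H : SimpleGraph P) (F : SimpleGraph V) : Prop :=
  ∃ e : P ≃ V, ∀ ⦃p q⦄, H.Adj p q → ¬F.Adj (e p) (e q)

lemma not_adj_swap_apply_of_adj {P V : Type*} [DecidableEq P] {H : SimpleGraph P}
    {F : SimpleGraph V} {e : P ≃ V} {i j p q : P} (hij : ¬H.Adj i j)
    (hj : ∀ y, H.Adj j y → ¬F.Adj (e i) (e y))
    (hi : ∀ y, H.Adj i y → ¬F.Adj (e j) (e y))
    (hpq : H.Adj p q) (hp : p = i ∨ p = j) :
    ¬F.Adj (e (Equiv.swap i j p)) (e (Equiv.swap i j q)) := by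
  rcases hp with rfl | rfl
  · have hqj : q ≠ j := by rintro rfl; exact hij hpq
    rw [Equiv.swap_apply_left, Equiv.swap_apply_of_ne_of_ne hpq.ne.symm hqj]
    exact hi q hpq
  · have hqi : q ≠ i := by rintro rfl; exact hij hpq.symm
    rw [Equiv.swap_apply_right, Equiv.swap_apply_of_ne_of_ne hqi hpq.ne.symm]
    exact hj q hpq

section Packing

variable {P V : Type*} [Fintype P] (H : SimpleGraph P) (F : SimpleGraph V)
  [DecidableRel H.Adj] [DecidableRel F.Adj]

def packingConflicts (e : P ≃ V) : Finset (P × P) :=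
  {pq | H.Adj pq.1 pq.2 ∧ F.Adj (e pq.1) (e pq.2)}

variable {H F}

@[simp]
lemma mem_packingConflicts {e : P ≃ V} {p q : P} :
    (p, q) ∈ packingConflicts H F e ↔ H.Adj p q ∧ F.Adj (e p) (e q) := by
  simp [packingConflicts]

lemma packingConflicts_swap_ssubset [DecidableEq P] {e : P ≃ V} {i j x : P}
    (hix : H.Adj i x) (hx : F.Adj (e i) (e x)) (hij : ¬H.Adj i j)
    (hj : ∀ y, H.Adj j y → ¬F.Adj (e i) (e y))
    (hi : ∀ y, H.Adj i y → ¬F.Adj (e j) (e y)) :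
    packingConflicts H F ((Equiv.swap i j).trans e) ⊂ packingConflicts H F e := by
  have key := fun p q => not_adj_swap_apply_of_adj (p := p) (q := q) hij hj hi
  refine (ssubset_iff_of_subset ?_).2 ⟨(i, x), by simp [hix, hx], ?_⟩
  · rintro ⟨p, q⟩
    simp only [mem_packingConflicts, Equiv.trans_apply]
    rintro ⟨hpq, hF⟩
    refine ⟨hpq, ?_⟩
    have hp : p ≠ i ∧ p ≠ j := by
      constructor <;> rintro rfl <;> exact key _ _ hpq (by simp) hF
    have hq : q ≠ i ∧ q ≠ j := by
      constructor <;> rintro rfl <;> exact key _ _ hpq.symm (by simp) hF.symm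
    rwa [Equiv.swap_apply_of_ne_of_ne hp.1 hp.2, Equiv.swap_apply_of_ne_of_ne hq.1 hq.2] at hF
  · simp only [mem_packingConflicts, Equiv.trans_apply, not_and]
    exact fun _ => key _ _ hix (.inl rfl)

lemma exists_swap_partner [Fintype V] (e : P ≃ V) (i : P) {a b : ℕ}
    (ha : ∀ p, H.degree p ≤ a) (hb : ∀ v, F.degree v ≤ b)
    (hab : a * (2 * b + 1) < Fintype.card P) :
    ∃ j, ¬H.Adj i j ∧ (∀ y, H.Adj j y → ¬F.Adj (e i) (e y)) ∧
      ∀ y, H.Adj i y → ¬F.Adj (e j) (e y) := by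
  classical
  set S := H.neighborFinset i ∪
    (F.neighborFinset (e i)).biUnion (fun w => H.neighborFinset (e.symm w)) ∪
    (H.neighborFinset i).biUnion (fun y => (F.neighborFinset (e y)).map e.symm.toEmbedding)
  have hS : #S < #(univ : Finset P) := calc
    #S ≤ a + b * a + a * b := by
      refine (card_union_le _ _).trans (add_le_add ((card_union_le _ _).trans
        (add_le_add ?_ ?_)) ?_)
      · exact (card_neighborFinset_eq_degree H i).trans_le (ha i)
      · refine (card_biUnion_le_card_mul _ _ a fun w _ => ?_).trans ?_
        · exact (card_neighborFinset_eq_degree H _).trans_le (ha _)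
        · rw [card_neighborFinset_eq_degree]; gcongr; exact hb _
      · refine (card_biUnion_le_card_mul _ _ b fun y _ => ?_).trans ?_
        · rw [card_map, card_neighborFinset_eq_degree]; exact hb _
        · rw [card_neighborFinset_eq_degree]; gcongr; exact ha _
    _ = a * (2 * b + 1) := by ring
    _ < #univ := by rwa [card_univ]
  obtain ⟨j, -, hjS⟩ := exists_mem_notMem_of_card_lt_card hS
  simp only [S, mem_union, mem_biUnion, mem_neighborFinset, mem_map_equiv, Equiv.symm_symm,
    not_or, not_exists, not_and] at hjS
  refine ⟨j, hjS.1.1, fun y hjy hy => ?_, fun y hiy hy => hjS.2 y hiy hy.symm⟩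
  exact hjS.1.2 (e y) hy (by simpa using hjy.symm)

theorem packs_of_degree_le [Fintype V] (hcard : Fintype.card P = Fintype.card V) {a b : ℕ}
    (ha : ∀ p, H.degree p ≤ a) (hb : ∀ v, F.degree v ≤ b)
    (hab : a * (2 * b + 1) < Fintype.card P) : H.Packs F := by
  classical
  have : Nonempty (P ≃ V) := ⟨Fintype.equivOfCardEq hcard⟩
  obtain ⟨e, he⟩ := Finite.exists_min fun e : P ≃ V => #(packingConflicts H F e)
  refine ⟨e, fun i x hix hx => ?_⟩
  obtain ⟨j, hij, hj, hi⟩ := exists_swap_partner e i ha hb hab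
  exact (card_lt_card (packingConflicts_swap_ssubset hix hx hij hj hi)).not_ge (he _)

end Packing

lemma degree_compl_le_card_sub_minDegree {V : Type*} [Fintype V] (G : SimpleGraph V)
    [DecidableRel G.Adj] (v : V) [Fintype (Gᶜ.neighborSet v)] :
    Gᶜ.degree v ≤ Fintype.card V - 1 - G.minDegree := by
  rw [degree_compl]
  have := G.minDegree_le_degree v
  omega

lemma degree_circulantGraph_le {G : Type*} [AddGroup G] (s : Finset G) (u : G)
    [Fintype ((circulantGraph (s : Set G)).neighborSet u)] :
    (circulantGraph (s : Set G)).degree u ≤ 2 * #s := by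
  classical
  rw [← card_neighborFinset_eq_degree, two_mul]
  calc #((circulantGraph (s : Set G)).neighborFinset u)
      ≤ #(s.image (fun d => -d + u) ∪ s.image (· + u)) := by
        refine card_le_card fun v hv => ?_
        simp only [mem_neighborFinset, circulantGraph_adj, mem_coe] at hv
        simp only [mem_union, mem_image]
        rcases hv.2 with h | h
        · exact .inl ⟨u - v, h, by rw [neg_sub, sub_add_cancel]⟩
        · exact .inr ⟨v - u, h, sub_add_cancel v u⟩
    _ ≤ #s + #s := (card_union_le _ _).trans (add_le_add card_image_le card_image_le)

def cyclePowGraph (n l : ℕ) : SimpleGraph (ZMod n) :=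
  circulantGraph ((Icc 1 l).image (Nat.cast : ℕ → ZMod n) : Set (ZMod n))

lemma degree_cyclePowGraph_le {n : ℕ} (l : ℕ) (p : ZMod n)
    [Fintype ((cyclePowGraph n l).neighborSet p)] : (cyclePowGraph n l).degree p ≤ 2 * l :=
  calc (cyclePowGraph n l).degree p
      ≤ 2 * #((Icc 1 l).image (Nat.cast : ℕ → ZMod n)) := by
        unfold cyclePowGraph at *
        exact degree_circulantGraph_le _ p
    _ ≤ 2 * l := by grw [card_image_le, Nat.card_Icc, Nat.add_sub_cancel]

lemma cyclePowGraph_adj_add_natCast {n l k : ℕ} (p : ZMod n) (hk₁ : 1 ≤ k) (hkl : k ≤ l)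
    (hln : l < n) : (cyclePowGraph n l).Adj p (p + k) := by
  have hk : (k : ZMod n) ≠ 0 := by
    rw [Ne, ZMod.natCast_eq_zero_iff]
    exact fun h => by have := Nat.eq_zero_of_dvd_of_lt h (by omega); omega
  simp only [cyclePowGraph, circulantGraph_adj, coe_image, Set.mem_image, mem_coe, mem_Icc,
    add_sub_cancel_left]
  exact ⟨by simpa using hk, .inr ⟨k, ⟨hk₁, hkl⟩, rfl⟩⟩

end SimpleGraph

lemma two_mul_mul_two_mul_sub_add_one_lt {n δ l : ℕ} (hδ : δ < n)
    (hdeg : (4 * (l : ℚ) - 1) / (4 * l) * n ≤ δ) : 2 * l * (2 * (n - 1 - δ) + 1) < n := by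
  rcases l.eq_zero_or_pos with rfl | hl
  -- for `l = 0` the ratio is `(-1) / 0 = 0`, so `hdeg` says nothing, but the claim is `0 < n`
  · simpa using hδ.trans_le' (Nat.zero_le δ)
  have hl' : (0 : ℚ) < 4 * l := by positivity
  rw [div_mul_eq_mul_div, div_le_iff₀ hl'] at hdeg
  have : (1 : ℚ) ≤ l := by exact_mod_cast hl
  qify [show 1 + δ ≤ n by omega, Nat.sub_sub]
  nlinarith

lemma containsPowHamCycle_of_packs {V : Type*} {G : SimpleGraph V} {l : ℕ}
    (hl : l < Nat.card V) (h : (SimpleGraph.cyclePowGraph (Nat.card V) l).Packs Gᶜ) :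
    ContainsPowHamCycle G l := by
  obtain ⟨e, he⟩ := h
  refine ⟨e, fun i k hk₁ hkl => ?_⟩
  have hadj := SimpleGraph.cyclePowGraph_adj_add_natCast i hk₁ hkl hl
  have := he hadj
  rw [compl_adj, not_and, not_not] at this
  exact this (e.injective.ne hadj.ne)

theorem powHamCycle_of_min_degree_general
    {V : Type*} [Fintype V] (G : SimpleGraph V) [DecidableRel G.Adj]
    (l : ℕ) (hn : 2 * l + 1 ≤ Fintype.card V)
    (hdeg : (4 * (l : ℚ) - 1) / (4 * l) * (Fintype.card V : ℚ) ≤ (G.minDegree : ℚ)) :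
    ContainsPowHamCycle G l := by
  classical
  have hcard : Nat.card V = Fintype.card V := Nat.card_eq_fintype_card
  have : NeZero (Nat.card V) := ⟨by omega⟩
  have : Nonempty V := Fintype.card_pos_iff.mp (by omega)
  refine containsPowHamCycle_of_packs (by omega) (packs_of_degree_le (a := 2 * l)
    (b := Fintype.card V - 1 - G.minDegree) (by simp) (fun p => degree_cyclePowGraph_le l p)
    (fun v => degree_compl_le_card_sub_minDegree G v) ?_)
  simpa [hcard] using two_mul_mul_two_mul_sub_add_one_lt G.minDegree_lt_card hdeg

theorem powHamCycle_of_min_degree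
    {V : Type*} [Fintype V] (G : SimpleGraph V) [DecidableRel G.Adj]
    (l : ℕ) (hl : 1 ≤ l) (hn : 2 * l + 1 ≤ Fintype.card V)
    (hdeg : (4 * (l : ℚ) - 1) / (4 * l) * (Fintype.card V : ℚ) ≤ (G.minDegree : ℚ)) :
    ContainsPowHamCycle G l :=
  powHamCycle_of_min_degree_general G l hn hdeg
end

section
/- Let G be a finite connected simple graph of diameter 2 on n vertices whose maximum degree satisfies Δ(G) ≤ (n-1)/2. Then G is radio graceful. -/
open SimpleGraph

open Finset

/-!
In a graph of diameter 2 distinct vertices are at distance 1 or 2, so a bijective labeling by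
`1, …, n` is a radio labeling exactly when consecutive labels sit on non-adjacent vertices, i.e. when
reading the vertices in label order traces a Hamiltonian path of `Gᶜ`. Every vertex has degree
`n - 1 - deg v ≥ (n - 1) / 2` in `Gᶜ`, and the Dirac–Ore argument produces that path: if no endpoint
of a path has a neighbour off the path, pigeonholing the endpoints' neighbours along the path closes
it into a cycle on the same vertices, and since `Gᶜ` is connected, opening that cycle next to an
outside vertex gives a longer path.
-/

theorem Cycle.chain_coe_reverse_append {α : Type*} {R : α → α → Prop} [Std.Symm R]
    {s t : List α} (hs : s ≠ []) (ht : t ≠ []) (hsc : s.IsChain R) (htc : t.IsChain R)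
    (hst : R (s.head hs) (t.head ht)) (hts : R (t.getLast ht) (s.getLast hs)) :
    Cycle.Chain R ↑(s.reverse ++ t) := by
  rw [Cycle.chain_ne_nil R (by simp [ht]), List.getLast_append_of_ne_nil _ ht, ← List.cons_append]
  refine ((List.isChain_reverse.2 (hsc.imp fun _ _ h => symm_of R h)).cons ?_).append htc ?_
  · simpa [List.head?_reverse, List.getLast?_eq_some_getLast hs] using hts
  · simpa [List.getLast?_cons, List.getLast?_reverse, List.head?_eq_some_head hs,
      List.head?_eq_some_head ht] using hst

theorem Cycle.Chain.exists_perm_isChain_cons {α : Type*} {R : α → α → Prop} {c : List α}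
    (h : Cycle.Chain R (c : Cycle α)) {y : α} (hy : y ∈ c) :
    ∃ t, (y :: t).Perm c ∧ (y :: t).IsChain R := by
  obtain ⟨s, t, rfl⟩ := List.append_of_mem hy
  have hrot : ((s ++ y :: t : List α) : Cycle α) = ((y :: (t ++ s) : List α) : Cycle α) :=
    Cycle.coe_eq_coe.2 (by simpa using List.isRotated_append (l := s) (l' := y :: t))
  rw [hrot, Cycle.chain_coe_cons] at h
  exact ⟨t ++ s, List.perm_append_comm (l₁ := y :: t), h.prefix ⟨[y], by simp⟩⟩

namespace SimpleGraph

variable {V : Type*} {H : SimpleGraph V}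

theorem Connected.exists_adj_of_mem_of_notMem (hH : H.Connected) {s : Set V} {u v : V}
    (hu : u ∈ s) (hv : v ∉ s) : ∃ x ∈ s, ∃ y ∉ s, H.Adj x y := by
  obtain ⟨d, -, hd⟩ := (hH u v).some.exists_boundary_dart s hu hv
  exact ⟨d.fst, hd.1, d.snd, hd.2, d.adj⟩

section Finite

variable [Fintype V] [DecidableRel H.Adj]

theorem exists_adj_adj_of_card_le_degree_add_degree {u w : V} (huw : u ≠ w) (hadj : ¬ H.Adj u w)
    (hcard : Fintype.card V ≤ H.degree u + H.degree w + 1) : ∃ x, H.Adj u x ∧ H.Adj x w := by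
  classical
  have hu : H.neighborFinset u ⊆ {u, w}ᶜ := fun x hx => by
    have hx := (mem_neighborFinset _ _ _).1 hx
    simp only [mem_compl, mem_insert, mem_singleton, not_or]
    exact ⟨hx.ne.symm, by rintro rfl; exact hadj hx⟩
  have hw : H.neighborFinset w ⊆ {u, w}ᶜ := fun x hx => by
    have hx := (mem_neighborFinset _ _ _).1 hx
    simp only [mem_compl, mem_insert, mem_singleton, not_or]
    exact ⟨by rintro rfl; exact hadj hx.symm, hx.ne.symm⟩
  have hlt : #({u, w}ᶜ : Finset V) < #(H.neighborFinset u) + #(H.neighborFinset w) := by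
    have := card_le_univ ({u, w} : Finset V)
    rw [card_pair huw] at this
    rw [card_compl, card_pair huw, card_neighborFinset_eq_degree, card_neighborFinset_eq_degree]
    omega
  obtain ⟨x, hx⟩ := inter_nonempty_of_card_lt_card_add_card hu hw hlt
  rw [mem_inter, mem_neighborFinset, mem_neighborFinset] at hx
  exact ⟨x, hx.1, hx.2.symm⟩

theorem connected_of_card_sub_one_le_two_mul_degree [Nonempty V]
    (hd : ∀ v, Fintype.card V - 1 ≤ 2 * H.degree v) : H.Connected := by
  refine .mk fun u w => ?_
  rcases eq_or_ne u w with rfl | huw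
  · rfl
  by_cases hadj : H.Adj u w
  · exact hadj.reachable
  obtain ⟨x, hux, hxw⟩ := exists_adj_adj_of_card_le_degree_add_degree huw hadj
    (by have := hd u; have := hd w; omega)
  exact hux.reachable.trans hxw.reachable

theorem exists_eq_append_adj_head_adj_getLast {l : List V} (hl : l ≠ []) {a b : V}
    (ha : ∀ x, H.Adj a x → x ∈ l.tail) (hb : ∀ x, H.Adj b x → x ∈ l.dropLast)
    (hlen : l.length ≤ H.degree a + H.degree b) :
    ∃ s t, l = s ++ t ∧
      ∃ (hs : s ≠ []) (ht : t ≠ []), H.Adj a (t.head ht) ∧ H.Adj b (s.getLast hs) := by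
  classical
  set S := (range (l.length - 1)).filter fun i => H.Adj a (l.getD (i + 1) a)
  set T := (range (l.length - 1)).filter fun i => H.Adj b (l.getD i a)
  have hS : H.degree a ≤ #S := by
    rw [← card_neighborFinset_eq_degree]
    refine (card_le_card fun x hx => ?_).trans (card_image_le (f := fun i => l.getD (i + 1) a))
    have hx := (mem_neighborFinset _ _ _).1 hx
    obtain ⟨j, hj, rfl⟩ := List.mem_iff_getElem.1 (ha x hx)
    simp only [List.getElem_tail, List.length_tail] at hj hx ⊢
    have hj' : j + 1 < l.length := by omega
    exact mem_image.2 ⟨j, by simpa [S, hj, hj'] using hx, by simp [hj']⟩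
  have hT : H.degree b ≤ #T := by
    rw [← card_neighborFinset_eq_degree]
    refine (card_le_card fun x hx => ?_).trans (card_image_le (f := fun i => l.getD i a))
    have hx := (mem_neighborFinset _ _ _).1 hx
    obtain ⟨j, hj, rfl⟩ := List.mem_iff_getElem.1 (hb x hx)
    simp only [List.getElem_dropLast, List.length_dropLast] at hj hx ⊢
    have hj' : j < l.length := by omega
    exact mem_image.2 ⟨j, by simpa [T, hj, hj'] using hx, by simp [hj']⟩
  have hl0 : 0 < l.length := List.length_pos_iff.2 hl
  obtain ⟨i, hi⟩ := inter_nonempty_of_card_lt_card_add_card (s := range (l.length - 1))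
    (t := S) (u := T) (filter_subset _ _) (filter_subset _ _) (by rw [card_range]; omega)
  simp only [S, T, mem_inter, mem_filter, mem_range] at hi
  obtain ⟨⟨hi, hia⟩, -, hib⟩ := hi
  refine ⟨l.take (i + 1), l.drop (i + 1), (List.take_append_drop _ _).symm,
    by simp; omega, by simp; omega, ?_, ?_⟩
  · simpa [List.getD_eq_getElem, show i + 1 < l.length by omega] using hia
  · simpa [List.getLast_take, List.getD_eq_getElem, show i < l.length by omega] using hib

theorem exists_perm_cycle_chain {l : List V} (hl : l ≠ []) (hch : l.IsChain H.Adj)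
    (ha : ∀ x, H.Adj (l.head hl) x → x ∈ l) (hb : ∀ x, H.Adj (l.getLast hl) x → x ∈ l)
    (hlen : l.length ≤ H.degree (l.head hl) + H.degree (l.getLast hl)) :
    ∃ c : List V, c.Perm l ∧ Cycle.Chain H.Adj c := by
  have ha' : ∀ x, H.Adj (l.head hl) x → x ∈ l.tail := fun x hx => by
    have hx' := ha x hx
    rw [← List.cons_head_tail hl, List.mem_cons] at hx'
    exact hx'.resolve_left hx.ne.symm
  have hb' : ∀ x, H.Adj (l.getLast hl) x → x ∈ l.dropLast := fun x hx => by
    have hx' := hb x hx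
    rw [← List.dropLast_concat_getLast hl, List.mem_append, List.mem_singleton] at hx'
    exact hx'.resolve_right hx.ne.symm
  obtain ⟨s, t, rfl, hs, ht, hst, hts⟩ := exists_eq_append_adj_head_adj_getLast hl ha' hb' hlen
  rw [List.head_append_of_ne_nil hs] at hst
  rw [List.getLast_append_of_ne_nil _ ht] at hts
  obtain ⟨hsc, htc, -⟩ := List.isChain_append.1 hch
  have := H.symm
  exact ⟨s.reverse ++ t, (List.reverse_perm s).append_right t,
    Cycle.chain_coe_reverse_append hs ht hsc htc hst hts⟩

theorem exists_nodup_isChain_length_eq_succ (hd : ∀ v, Fintype.card V - 1 ≤ 2 * H.degree v)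
    {l : List V} (hnd : l.Nodup) (hch : l.IsChain H.Adj) {v : V} (hv : v ∉ l) :
    ∃ l' : List V, l'.Nodup ∧ l'.IsChain H.Adj ∧ l'.length = l.length + 1 := by
  rcases eq_or_ne l [] with rfl | hl
  · exact ⟨[v], List.nodup_singleton v, List.isChain_singleton v, rfl⟩
  by_cases hA : ∃ x ∉ l, H.Adj x (l.head hl)
  · obtain ⟨x, hx, hxa⟩ := hA
    exact ⟨x :: l, hnd.cons hx, hch.cons (by simpa [List.head?_eq_some_head hl]), rfl⟩
  by_cases hB : ∃ x ∉ l, H.Adj x (l.getLast hl)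
  · obtain ⟨x, hx, hxb⟩ := hB
    refine ⟨x :: l.reverse, (List.nodup_reverse.2 hnd).cons (by simp [hx]), ?_, by simp⟩
    exact (List.isChain_reverse.2 (hch.imp fun _ _ h => h.symm)).cons
      (by simpa [List.head?_reverse, List.getLast?_eq_some_getLast hl])
  push Not at hA hB
  have hlen : l.length + 1 ≤ Fintype.card V := (hnd.cons hv).length_le_card
  obtain ⟨c, hcl, hc⟩ := exists_perm_cycle_chain hl hch
    (fun x hx => by_contra fun h => hA x h hx.symm) (fun x hx => by_contra fun h => hB x h hx.symm)
    (by have := hd (l.head hl); have := hd (l.getLast hl); omega)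
  have : Nonempty V := ⟨v⟩
  obtain ⟨w, hw, y, hy, hwy⟩ :=
    (connected_of_card_sub_one_le_two_mul_degree hd).exists_adj_of_mem_of_notMem
      (s := {x | x ∉ l}) (v := l.head hl) hv (by simp)
  obtain ⟨t, hyt, ht⟩ := hc.exists_perm_isChain_cons (hcl.mem_iff.2 (not_not.1 hy))
  have hytl := hyt.trans hcl
  exact ⟨w :: y :: t, (hytl.nodup_iff.2 hnd).cons (fun h => hw (hytl.mem_iff.1 h)),
    ht.cons (by simpa), by simp [← hytl.length_eq]⟩

theorem exists_nodup_isChain_forall_mem (hd : ∀ v, Fintype.card V - 1 ≤ 2 * H.degree v) :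
    ∃ l : List V, l.Nodup ∧ l.IsChain H.Adj ∧ ∀ v, v ∈ l := by
  classical
  suffices ∀ m ≤ Fintype.card V, ∃ l : List V, l.Nodup ∧ l.IsChain H.Adj ∧ l.length = m by
    obtain ⟨l, hnd, hch, hlen⟩ := this _ le_rfl
    refine ⟨l, hnd, hch, fun v => by_contra fun hv => ?_⟩
    have := (hnd.cons hv).length_le_card
    simp only [List.length_cons] at this
    omega
  intro m hm
  induction m with
  | zero => exact ⟨[], List.nodup_nil, List.isChain_nil, rfl⟩
  | succ m ih =>
    obtain ⟨l, hnd, hch, rfl⟩ := ih (by omega)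
    obtain ⟨v, hv⟩ : ∃ v, v ∉ l := by
      by_contra! h
      have := List.toFinset_card_of_nodup hnd
      rw [Finset.eq_univ_of_forall fun v => List.mem_toFinset.2 (h v), card_univ] at this
      omega
    exact exists_nodup_isChain_length_eq_succ hd hnd hch hv

end Finite

end SimpleGraph

theorem traceable_of_card_sub_one_le_two_mul_degree {V : Type*} [Fintype V] [Nonempty V]
    {H : SimpleGraph V} [DecidableRel H.Adj] (hd : ∀ v, Fintype.card V - 1 ≤ 2 * H.degree v) :
    Traceable H := by
  obtain ⟨l, hnd, hch, hl⟩ := exists_nodup_isChain_forall_mem hd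
  have hne : l ≠ [] := List.ne_nil_of_mem (hl (Classical.arbitrary V))
  exact ⟨_, _, Walk.ofSupport l hne hch, by simpa [Walk.isPath_def, Walk.support_ofSupport],
    by simpa [Walk.support_ofSupport]⟩

theorem isRadioLabeling_of_diam_eq_two {V : Type*} {G : SimpleGraph V} (hconn : G.Connected)
    (hdiam : G.diam = 2) {f : V → ℕ} (hf : Function.Injective f)
    (hadj : ∀ u v, f v = f u + 1 → ¬ G.Adj u v) : IsRadioLabeling G f := by
  intro u v huv
  have hne : f u ≠ f v := hf.ne huv
  have hdist : 1 ≤ G.dist u v := hconn.pos_dist_of_ne huv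
  rw [hdiam]
  by_cases huv' : G.Adj u v
  · have h1 : f v ≠ f u + 1 := fun h => hadj u v h huv'
    have h2 : f u ≠ f v + 1 := fun h => hadj v u h huv'.symm
    rcases abs_cases ((f u : ℤ) - f v) with ⟨h, _⟩ | ⟨h, _⟩ <;> rw [h] <;> omega
  · have h : G.dist u v ≠ 1 := fun h => huv' (dist_eq_one_iff_adj.1 h)
    rcases abs_cases ((f u : ℤ) - f v) with ⟨h, _⟩ | ⟨h, _⟩ <;> rw [h] <;> omega

theorem radioGraceful_of_traceable_compl {V : Type*} {G : SimpleGraph V} (hconn : G.Connected)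
    (hdiam : G.diam = 2) (h : Traceable Gᶜ) : RadioGraceful G := by
  classical
  obtain ⟨a, b, p, hp, hmem⟩ := h
  set e := (hp.isHamiltonian_of_mem hmem).getVertEquiv
  refine ⟨fun v => (e.symm v : ℕ) + 1, isRadioLabeling_of_diam_eq_two hconn hdiam ?_ ?_, ?_⟩
  · exact fun u v huv => e.symm.injective (Fin.ext (by simpa using huv))
  · intro u v huv
    have hsucc : (e.symm v : ℕ) = e.symm u + 1 := by omega
    have hlt : (e.symm v : ℕ) < p.length + 1 := by simpa using (e.symm v).isLt
    have hadj := p.adj_getVert_succ (i := e.symm u) (by omega)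
    have hvert : ∀ x, p.getVert (e.symm x) = x := e.apply_symm_apply
    rw [← hsucc, hvert, hvert] at hadj
    exact hadj.2
  · have hcard : Nat.card V = p.support.length := by simp [← Nat.card_congr e]
    ext m
    simp only [Set.mem_range, Set.mem_Icc, hcard]
    constructor
    · rintro ⟨v, rfl⟩
      exact ⟨by omega, (e.symm v).isLt⟩
    · rintro ⟨h1, h2⟩
      exact ⟨e ⟨m - 1, by omega⟩, by simp only [Equiv.symm_apply_apply]; omega⟩

theorem radioGraceful_of_diam_two_max_degree
    {V : Type*} [Fintype V] (G : SimpleGraph V) [DecidableRel G.Adj]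
    (hconn : G.Connected) (hdiam : G.diam = 2)
    (hdeg : (G.maxDegree : ℚ) ≤ ((Fintype.card V : ℚ) - 1) / 2) :
    RadioGraceful G := by
  classical
  have : Nonempty V := hconn.nonempty
  have hΔ : 2 * G.maxDegree ≤ Fintype.card V - 1 := by
    have hpos : 1 ≤ Fintype.card V := Fintype.card_pos
    have : ((2 * G.maxDegree : ℕ) : ℚ) ≤ ((Fintype.card V - 1 : ℕ) : ℚ) := by
      push_cast [hpos]
      linarith
    exact_mod_cast this
  refine radioGraceful_of_traceable_compl hconn hdiam
    (traceable_of_card_sub_one_le_two_mul_degree fun v => ?_)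
  have := G.degree_le_maxDegree v
  rw [G.degree_compl v]
  omega
end

section
/- Let n ≥ 5 be an odd integer and let G be a finite ((n-1)/2)-regular simple graph on n vertices. Then both G and its complement graph are radio graceful. -/
open SimpleGraph

/-!
If `2 δ(G) + 1 ≥ n`, two non-adjacent vertices have a common neighbour, so `G` has diameter 2
unless it is complete, and Dirac's longest-path argument gives a Hamiltonian path: a maximal path
whose end vertices have no neighbours outside it closes up into a cycle by pigeonhole, and the
cycle is entered from an outside vertex by connectivity. An `(n-1)/2`-regular graph on `n`
vertices and its complement both satisfy `2 δ + 1 ≥ n`. Labelling the vertices `1, …, n` along a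
Hamiltonian path of `Gᶜ` is a radio labeling of `G`: consecutive labels sit at distance 2 in `G`,
and any other two labels differ by at least 2.
-/

namespace List

variable {α : Type*}

theorem exists_eq_append_cons_cons_of_idxOf_succ [DecidableEq α] {l : List α} {x z : α}
    (hx : x ∈ l) (h : l.idxOf z + 1 = l.idxOf x) : ∃ p q, l = p ++ z :: x :: q := by
  have hxl : l.idxOf x < l.length := idxOf_lt_length_iff.mpr hx
  have hzl : l.idxOf z < l.length := by omega
  refine ⟨l.take (l.idxOf z), l.drop (l.idxOf x + 1), ?_⟩
  conv_lhs => rw [← take_append_drop (l.idxOf z) l, drop_eq_getElem_cons hzl,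
    drop_eq_getElem_cons (by omega : l.idxOf z + 1 < l.length)]
  simp only [getElem_idxOf, h]

theorem IsChain.rel_of_idxOf_succ [DecidableEq α] {R : α → α → Prop} {l : List α} {x z : α}
    (hl : l.IsChain R) (hx : x ∈ l) (h : l.idxOf z + 1 = l.idxOf x) : R z x := by
  obtain ⟨p, q, rfl⟩ := exists_eq_append_cons_cons_of_idxOf_succ hx h
  exact isChain_pair.mp (hl.infix ⟨p, q, by simp⟩)

theorem exists_perm_isChain_cons_of_cycleChain {R : α → α → Prop} {c : List α} {x y : α}
    (hc : Cycle.Chain R c) (hy : y ∈ c) (hxy : R x y) : ∃ r, r ~ c ∧ (x :: r).IsChain R := by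
  obtain ⟨p, q, rfl⟩ := append_of_mem hy
  have hrot : ((p ++ y :: q : List α) : Cycle α) = (y :: (q ++ p) : List α) :=
    Cycle.coe_eq_coe.mpr (by simpa using isRotated_append (l := p) (l' := y :: q))
  rw [hrot, Cycle.chain_coe_cons] at hc
  refine ⟨y :: (q ++ p), (perm_append_comm (l₁ := p) (l₂ := y :: q)).symm,
    isChain_cons.mpr ⟨by simpa, ?_⟩⟩
  exact hc.infix ⟨[], [y], by simp⟩

end List

namespace SimpleGraph

variable {V : Type*} {G : SimpleGraph V}

theorem cycleChain_append_reverse {s t : List V} {a z x b : V} (hst : (s ++ t).IsChain G.Adj)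
    (ha : s.head? = some a) (hz : s.getLast? = some z) (hx : t.head? = some x)
    (hb : t.getLast? = some b) (hax : G.Adj a x) (hbz : G.Adj b z) :
    Cycle.Chain G.Adj (t ++ s.reverse : List V) := by
  have hne : t ++ s.reverse ≠ [] := by
    rintro h
    simp [List.append_eq_nil_iff.mp h] at hx
  have hlast : (t ++ s.reverse).getLast hne = a := by
    apply Option.some_injective
    rw [← List.getLast?_eq_some_getLast, List.getLast?_append, List.getLast?_reverse, ha]
    rfl
  obtain ⟨hs, ht, -⟩ := List.isChain_append.mp hst
  rw [Cycle.chain_ne_nil _ hne, hlast, List.isChain_cons, List.isChain_append,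
    List.isChain_reverse]
  refine ⟨by simpa [List.head?_append, hx] using hax, ht, hs.imp fun _ _ h => h.symm, ?_⟩
  simpa [hb, hz] using hbz

section Finite

variable [Fintype V] [DecidableRel G.Adj]

theorem exists_adj_adj_of_not_adj {u v : V} (huv : u ≠ v) (hadj : ¬G.Adj u v)
    (hdeg : Fintype.card V ≤ G.degree u + G.degree v + 1) : ∃ w, G.Adj u w ∧ G.Adj v w := by
  classical
  have hu : G.neighborFinset u ⊆ ({u, v} : Finset V)ᶜ := by
    intro w hw
    rw [mem_neighborFinset] at hw
    simp only [Finset.mem_compl, Finset.mem_insert, Finset.mem_singleton, not_or]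
    exact ⟨hw.ne.symm, fun h => hadj (h ▸ hw)⟩
  have hv : G.neighborFinset v ⊆ ({u, v} : Finset V)ᶜ := by
    intro w hw
    rw [mem_neighborFinset] at hw
    simp only [Finset.mem_compl, Finset.mem_insert, Finset.mem_singleton, not_or]
    exact ⟨fun h => hadj (h ▸ hw.symm), hw.ne.symm⟩
  have htwo := Finset.card_le_univ ({u, v} : Finset V)
  rw [Finset.card_pair huv] at htwo
  obtain ⟨w, hw⟩ := Finset.inter_nonempty_of_card_lt_card_add_card hu hv (by
    rw [Finset.card_compl, Finset.card_pair huv, card_neighborFinset_eq_degree,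
      card_neighborFinset_eq_degree]
    omega)
  simp only [Finset.mem_inter, mem_neighborFinset] at hw
  exact ⟨w, hw⟩

theorem edist_le_two_of_minDegree (hδ : Fintype.card V ≤ 2 * G.minDegree + 1) (u v : V) :
    G.edist u v ≤ 2 := by
  by_cases huv : u = v
  · simp [huv]
  by_cases hadj : G.Adj u v
  · rw [edist_eq_one_iff_adj.mpr hadj]
    norm_num
  have := G.minDegree_le_degree u
  have := G.minDegree_le_degree v
  obtain ⟨w, huw, hvw⟩ := exists_adj_adj_of_not_adj huv hadj (by omega)
  simpa using edist_le (huw.toWalk.append hvw.symm.toWalk)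

theorem preconnected_of_minDegree (hδ : Fintype.card V ≤ 2 * G.minDegree + 1) :
    G.Preconnected := fun u v =>
  reachable_of_edist_ne_top (ne_top_of_le_ne_top (by decide) (edist_le_two_of_minDegree hδ u v))

theorem diam_eq_two_of_minDegree (hδ : Fintype.card V ≤ 2 * G.minDegree + 1) (hG : G ≠ ⊤) :
    G.diam = 2 := by
  obtain ⟨u, v, huv, hadj⟩ : ∃ u v, u ≠ v ∧ ¬G.Adj u v := by
    contrapose! hG
    ext u v
    exact ⟨fun h => h.ne, hG u v⟩
  have hediam : G.ediam ≤ 2 := ediam_le_iff.mpr (edist_le_two_of_minDegree hδ)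
  have hdist : 2 ≤ G.dist u v := by
    have h0 := ((preconnected_of_minDegree hδ) u v).pos_dist_of_ne huv
    have h1 : G.dist u v ≠ 1 := fun h => hadj (dist_eq_one_iff_adj.mp h)
    omega
  have := dist_le_diam (ne_top_of_le_ne_top (by decide) hediam) (u := u) (v := v)
  have : G.diam ≤ 2 := ENat.toNat_le_of_le_natCast hediam
  omega

theorem exists_eq_append_cons_cons_adj_adj {l : List V} {a b : V} (hl : l.Nodup)
    (ha : l.head? = some a) (hb : l.getLast? = some b)
    (haN : ∀ x, G.Adj a x → x ∈ l) (hbN : ∀ x, G.Adj b x → x ∈ l)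
    (hdeg : l.length ≤ G.degree a + G.degree b) :
    ∃ p z x q, l = p ++ z :: x :: q ∧ G.Adj a x ∧ G.Adj b z := by
  classical
  have hpos : 0 < l.length := List.length_pos_iff.mpr (by rintro rfl; simp at ha)
  have hinj : Set.InjOn l.idxOf {x | x ∈ l} := fun x hx y _ h => (List.idxOf_inj hx).mp h
  set A := (G.neighborFinset a).image l.idxOf
  set B := (G.neighborFinset b).image (l.idxOf · + 1)
  have hA : A ⊆ Finset.Icc 1 (l.length - 1) := by
    simp only [A, Finset.image_subset_iff, mem_neighborFinset, Finset.mem_Icc]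
    intro x hx
    obtain ⟨m, rfl⟩ := List.head?_eq_some_iff.mp ha
    have := List.idxOf_lt_length_iff.mpr (haN x hx)
    rw [List.idxOf_cons_ne _ hx.ne] at this ⊢
    simp only [List.length_cons] at this ⊢
    omega
  have hB : B ⊆ Finset.Icc 1 (l.length - 1) := by
    simp only [B, Finset.image_subset_iff, mem_neighborFinset, Finset.mem_Icc]
    intro z hz
    have hzl := List.idxOf_lt_length_iff.mpr (hbN z hz)
    refine ⟨by omega, Nat.lt_iff_add_one_le.mp (lt_of_le_of_ne (by omega) fun h => hz.ne ?_)⟩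
    rw [List.getLast?_eq_getElem?, ← h, List.getElem?_eq_getElem hzl, List.getElem_idxOf] at hb
    exact (Option.some_injective _ hb).symm
  obtain ⟨i, hi⟩ := Finset.inter_nonempty_of_card_lt_card_add_card hA hB (by
    rw [Nat.card_Icc, Finset.card_image_of_injOn (hinj.mono fun x hx => haN x
        ((mem_neighborFinset ..).mp hx)),
      Finset.card_image_of_injOn (fun x hx y hy h => hinj (hbN x ((mem_neighborFinset ..).mp hx))
        (hbN y ((mem_neighborFinset ..).mp hy)) (Nat.add_right_cancel h)),
      card_neighborFinset_eq_degree, card_neighborFinset_eq_degree]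
    omega)
  simp only [A, B, Finset.mem_inter, Finset.mem_image, mem_neighborFinset] at hi
  obtain ⟨⟨x, hax, rfl⟩, z, hbz, hzx⟩ := hi
  obtain ⟨p, q, hl⟩ := List.exists_eq_append_cons_cons_of_idxOf_succ (haN x hax) hzx
  exact ⟨p, z, x, q, hl, hax, hbz⟩

theorem exists_nodup_isChain_length_succ_of_minDegree
    (hδ : Fintype.card V ≤ 2 * G.minDegree + 1) {l : List V} (hl : l.Nodup)
    (hch : l.IsChain G.Adj) (hne : l ≠ []) (hlt : l.length < Fintype.card V) :
    ∃ l' : List V, l'.Nodup ∧ l'.IsChain G.Adj ∧ l'.length = l.length + 1 := by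
  classical
  obtain ⟨w, hw⟩ : ∃ w, w ∉ l := by
    by_contra! h
    have := Finset.card_le_card (fun w _ => List.mem_toFinset.mpr (h w) :
      Finset.univ ⊆ l.toFinset)
    have := l.toFinset_card_le
    rw [Finset.card_univ] at *
    omega
  obtain ⟨a, ha⟩ : ∃ a, l.head? = some a := ⟨_, List.head?_eq_some_head hne⟩
  obtain ⟨b, hb⟩ : ∃ b, l.getLast? = some b := ⟨_, List.getLast?_eq_some_getLast hne⟩
  by_cases haN : ∀ x, G.Adj a x → x ∈ l
  swap
  · push Not at haN
    obtain ⟨x, hax, hx⟩ := haN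
    refine ⟨x :: l, List.nodup_cons.mpr ⟨hx, hl⟩, List.isChain_cons.mpr ⟨?_, hch⟩, rfl⟩
    rw [ha]
    simpa using hax.symm
  by_cases hbN : ∀ x, G.Adj b x → x ∈ l
  swap
  · push Not at hbN
    obtain ⟨x, hbx, hx⟩ := hbN
    refine ⟨x :: l.reverse,
      List.nodup_cons.mpr ⟨by simpa using hx, List.nodup_reverse.mpr hl⟩,
      List.isChain_cons.mpr ⟨?_, List.isChain_reverse.mpr (hch.imp fun _ _ h => h.symm)⟩,
      by simp⟩
    rw [List.head?_reverse, hb]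
    simpa using hbx.symm
  -- Both ends of `l` have all their neighbours on `l`: close `l` into a cycle, enter it from `w`.
  have := G.minDegree_le_degree a
  have := G.minDegree_le_degree b
  obtain ⟨p, z, x, q, hpq, hax, hbz⟩ :=
    exists_eq_append_cons_cons_adj_adj hl ha hb haN hbN (by omega)
  have hc := cycleChain_append_reverse (s := p ++ [z]) (t := x :: q) (by simpa [hpq] using hch)
    (by simpa [hpq, List.head?_append] using ha) (by simp) rfl (by simpa [hpq] using hb) hax hbz
  have hperm : (x :: q ++ (p ++ [z]).reverse).Perm l := hpq ▸
    ((List.reverse_perm _).append_left _).trans (List.perm_append_comm.trans (by simp))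
  obtain ⟨d, -, hd, hdw⟩ := ((preconnected_of_minDegree hδ) a w).some.exists_boundary_dart
    {v | v ∈ l} (List.mem_of_mem_head? ha) hw
  obtain ⟨r, hr, hchr⟩ := List.exists_perm_isChain_cons_of_cycleChain hc (hperm.mem_iff.mpr hd)
    d.adj.symm
  exact ⟨d.toProd.2 :: r, List.nodup_cons.mpr ⟨fun h => hdw ((hr.trans hperm).mem_iff.mp h),
    (hr.trans hperm).nodup_iff.mpr hl⟩, hchr, by simp [(hr.trans hperm).length_eq]⟩

theorem exists_nodup_isChain_forall_mem_of_minDegree [Nonempty V]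
    (hδ : Fintype.card V ≤ 2 * G.minDegree + 1) :
    ∃ l : List V, l.Nodup ∧ l.IsChain G.Adj ∧ ∀ v, v ∈ l := by
  classical
  have hlen : ∀ k, 1 ≤ k → k ≤ Fintype.card V →
      ∃ l : List V, l.Nodup ∧ l.IsChain G.Adj ∧ l.length = k := by
    intro k hk
    induction k, hk using Nat.le_induction with
    | base =>
      exact fun _ =>
        ⟨[Classical.arbitrary V], List.nodup_singleton _, List.isChain_singleton _, rfl⟩
    | succ k hk ih =>
      intro hkn
      obtain ⟨l, hl, hch, rfl⟩ := ih (by omega)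
      exact exists_nodup_isChain_length_succ_of_minDegree hδ hl hch
        (List.ne_nil_of_length_pos hk) (by omega)
  obtain ⟨l, hl, hch, hlen⟩ := hlen _ Fintype.card_pos le_rfl
  have huniv : l.toFinset = Finset.univ :=
    Finset.eq_univ_of_card _ (by rw [List.toFinset_card_of_nodup hl, hlen])
  exact ⟨l, hl, hch, fun v => List.mem_toFinset.mp (huniv ▸ Finset.mem_univ v)⟩

end Finite

end SimpleGraph

theorem radioGraceful_of_diam_eq_two {V : Type*} [Fintype V] {G : SimpleGraph V}
    (hdiam : G.diam = 2) {l : List V} (hl : l.Nodup) (hch : l.IsChain Gᶜ.Adj)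
    (hmem : ∀ v, v ∈ l) : RadioGraceful G := by
  classical
  have : Nontrivial V := nontrivial_of_diam_ne_zero (G := G) (by omega)
  have hconn : G.Connected := connected_iff_diam_ne_zero.mpr (by omega)
  have hlen : l.length = Nat.card V := by
    rw [Nat.card_eq_fintype_card, ← List.toFinset_card_of_nodup hl, ← Finset.card_univ]
    exact congrArg _ (Finset.eq_univ_of_forall fun v => List.mem_toFinset.mpr (hmem v))
  have hsucc : ∀ u v, l.idxOf u + 1 = l.idxOf v → 2 ≤ G.dist u v := by
    intro u v h
    obtain ⟨huv, hadj⟩ := (compl_adj G u v).mp (hch.rel_of_idxOf_succ (hmem v) h)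
    have := hconn.pos_dist_of_ne huv
    have : G.dist u v ≠ 1 := fun h => hadj (dist_eq_one_iff_adj.mp h)
    omega
  refine ⟨fun v => l.idxOf v + 1, fun u v huv => ?_, ?_⟩
  · have hne : l.idxOf u ≠ l.idxOf v := fun h => huv ((List.idxOf_inj (hmem u)).mp h)
    have := hconn.pos_dist_of_ne huv
    have := le_abs_self ((l.idxOf u + 1 : ℕ) - (l.idxOf v + 1 : ℕ) : ℤ)
    have := neg_abs_le ((l.idxOf u + 1 : ℕ) - (l.idxOf v + 1 : ℕ) : ℤ)
    beta_reduce
    rw [hdiam]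
    rcases lt_trichotomy (l.idxOf u + 1) (l.idxOf v) with h | h | h
    · omega
    · have := hsucc u v h
      omega
    · rcases Nat.lt_or_ge (l.idxOf v + 1) (l.idxOf u) with h' | h'
      · omega
      · have := hsucc v u (by omega)
        rw [G.dist_comm] at this
        omega
  · ext m
    simp only [Set.mem_range, Set.mem_Icc, ← hlen]
    constructor
    · rintro ⟨v, rfl⟩
      have := List.idxOf_lt_length_iff.mpr (hmem v)
      omega
    · rintro ⟨h1, h2⟩
      exact ⟨l[m - 1], by rw [hl.idxOf_getElem]; omega⟩

theorem radioGraceful_of_minDegree {V : Type*} [Fintype V] [DecidableEq V] [Nontrivial V]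
    {G : SimpleGraph V} [DecidableRel G.Adj] (hG : Fintype.card V ≤ 2 * G.minDegree + 1)
    (hGc : Fintype.card V ≤ 2 * Gᶜ.minDegree + 1) : RadioGraceful G := by
  have hne : G ≠ ⊤ := by
    rintro rfl
    have := Fintype.one_lt_card (α := V)
    simp [compl_top, minDegree_bot_eq_zero] at hGc
    omega
  obtain ⟨l, hl, hch, hmem⟩ := exists_nodup_isChain_forall_mem_of_minDegree hGc
  exact radioGraceful_of_diam_eq_two (diam_eq_two_of_minDegree hG hne) hl hch hmem

theorem radioGraceful_self_and_compl_of_half_regular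
    {V : Type*} [Fintype V] (G : SimpleGraph V) [DecidableRel G.Adj]
    (n : ℕ) (hn : 5 ≤ n) (hodd : Odd n) (hcard : Fintype.card V = n)
    (hreg : G.IsRegularOfDegree ((n - 1) / 2)) :
    RadioGraceful G ∧ RadioGraceful Gᶜ := by
  classical
  have : Nontrivial V := Fintype.one_lt_card_iff_nontrivial.mp (by omega)
  obtain ⟨k, rfl⟩ := hodd
  have hG : Fintype.card V ≤ 2 * G.minDegree + 1 := by
    rw [hreg.minDegree_eq]
    omega
  have hGc : Fintype.card V ≤ 2 * Gᶜ.minDegree + 1 := by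
    rw [hreg.compl.minDegree_eq]
    omega
  exact ⟨radioGraceful_of_minDegree hG hGc, radioGraceful_of_minDegree hGc (by simpa using hG)⟩
end

section
/- For every m ≥ 5, the complement of the cycle graph C_m is radio graceful, and for every n ≥ 5, the complement of the path graph P_n is radio graceful. -/
/-!
If every vertex of `G` has at most two neighbours and `G` has at least five vertices, then for an
edge `uv` of `G` the set `N(u) ∪ N(v)`, which contains `u` and `v`, has at most four elements, so
some other vertex is adjacent to both `u` and `v` in `Gᶜ`; hence `Gᶜ` has diameter at most 2.
In a graph of diameter at most 2, an injective labelling is a radio labelling as soon as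
consecutive labels never sit on adjacent vertices. Both `C_m` and `P_n` contain the path
`0, 1, …, n - 1`, so labelling vertex `i` by `i + 1` puts consecutive labels on an edge of `G`,
i.e. on a non-edge of `Gᶜ`.
-/

open SimpleGraph

namespace SimpleGraph

variable {V : Type*}

lemma ediam_le_two_of_exists_common_adj {G : SimpleGraph V}
    (h : ∀ u v, u ≠ v → ¬G.Adj u v → ∃ w, G.Adj u w ∧ G.Adj w v) : G.ediam ≤ 2 := by
  refine ediam_le_of_edist_le fun u v => ?_
  rcases eq_or_ne u v with rfl | hne
  · simp
  by_cases hadj : G.Adj u v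
  · rw [edist_eq_one_iff_adj.mpr hadj]; norm_num
  obtain ⟨w, huw, hwv⟩ := h u v hne hadj
  simpa using edist_le (huw.toWalk.append hwv.toWalk)

lemma exists_common_adj_compl_of_degree_le_two [Fintype V] [DecidableEq V] {G : SimpleGraph V}
    [DecidableRel G.Adj] (hdeg : ∀ v, G.degree v ≤ 2) (hcard : 5 ≤ Fintype.card V) {u v : V}
    (huv : G.Adj u v) : ∃ w, Gᶜ.Adj u w ∧ Gᶜ.Adj w v := by
  have hlt : (G.neighborFinset u ∪ G.neighborFinset v).card < Fintype.card V :=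
    calc _ ≤ G.degree u + G.degree v := Finset.card_union_le _ _
      _ < Fintype.card V := by linarith [hdeg u, hdeg v]
  obtain ⟨w, -, hw⟩ :=
    Finset.exists_mem_notMem_of_card_lt_card (t := Finset.univ) (hlt.trans_eq Finset.card_univ.symm)
  simp only [Finset.mem_union, mem_neighborFinset, not_or] at hw
  refine ⟨w, (compl_adj G u w).mpr ⟨?_, hw.1⟩,
    (compl_adj G w v).mpr ⟨?_, fun h => hw.2 h.symm⟩⟩
  · rintro rfl; exact hw.2 huv.symm
  · rintro rfl; exact hw.1 huv

lemma ediam_compl_le_two_of_degree_le_two [Fintype V] [DecidableEq V] {G : SimpleGraph V}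
    [DecidableRel G.Adj] (hdeg : ∀ v, G.degree v ≤ 2) (hcard : 5 ≤ Fintype.card V) :
    Gᶜ.ediam ≤ 2 :=
  ediam_le_two_of_exists_common_adj fun _ _ hne hnadj =>
    exists_common_adj_compl_of_degree_le_two hdeg hcard <| by simpa [compl_adj, hne] using hnadj

lemma cycleGraph_degree_le_two (n : ℕ) (v : Fin n) : (cycleGraph n).degree v ≤ 2 := by
  match n with
  | 0 => exact v.elim0
  | 1 => simp [degree]
  | n + 2 => rw [cycleGraph_degree_two_le]; exact Finset.card_le_two

end SimpleGraph

lemma isRadioLabeling_of_ediam_le_two {V : Type*} {G : SimpleGraph V} (hG : G.ediam ≤ 2)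
    {f : V → ℕ} (hf : Function.Injective f) (hconsec : ∀ u v, f u + 1 = f v → ¬G.Adj u v) :
    IsRadioLabeling G f := by
  intro u v hne
  have hdiam : G.diam ≤ 2 := ENat.toNat_le_toNat hG (by norm_num)
  have hreach : G.Reachable u v :=
    reachable_of_edist_ne_top (ne_top_of_le_ne_top (by norm_num) (edist_le_ediam.trans hG))
  have hfne : (f u : ℤ) ≠ f v := by exact_mod_cast hf.ne hne
  by_cases hadj : G.Adj u v
  · have hgap : 2 ≤ |(f u : ℤ) - f v| := by
      have h₁ : f u + 1 ≠ f v := fun h => hconsec u v h hadj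
      have h₂ : f v + 1 ≠ f u := fun h => hconsec v u h hadj.symm
      rw [le_abs]; omega
    have hdist : G.dist u v = 1 := dist_eq_one_iff_adj.mpr hadj
    omega
  · have hgap : 1 ≤ |(f u : ℤ) - f v| := Int.one_le_abs (sub_ne_zero.mpr hfne)
    have hdist := hreach.one_lt_dist_of_ne_of_not_adj hne hadj
    omega

lemma radioGraceful_of_ediam_le_two {n : ℕ} {G : SimpleGraph (Fin n)} (hG : G.ediam ≤ 2)
    (hconsec : ∀ i j : Fin n, i.val + 1 = j.val → ¬G.Adj i j) : RadioGraceful G := by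
  refine ⟨fun i => i.val + 1, isRadioLabeling_of_ediam_le_two hG
    (fun i j h => Fin.ext (Nat.succ_injective h)) fun i j h => hconsec i j (by omega), ?_⟩
  ext k
  simp only [Set.mem_range, Set.mem_Icc, Nat.card_eq_fintype_card, Fintype.card_fin]
  constructor
  · rintro ⟨i, rfl⟩; omega
  · rintro ⟨h1, h2⟩; exact ⟨⟨k - 1, by omega⟩, by simp; omega⟩

lemma radioGraceful_compl_of_pathGraph_le {n : ℕ} {G : SimpleGraph (Fin n)}
    [DecidableRel G.Adj] (hpath : pathGraph n ≤ G) (hdeg : ∀ v, G.degree v ≤ 2)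
    (hn : 5 ≤ n) : RadioGraceful Gᶜ :=
  radioGraceful_of_ediam_le_two (ediam_compl_le_two_of_degree_le_two hdeg (by simpa using hn))
    fun i j h hadj => hadj.2 (hpath (pathGraph_adj.mpr (Or.inl h)))

theorem radioGraceful_compl_cycle_and_compl_path :
    (∀ m : ℕ, 5 ≤ m → RadioGraceful (SimpleGraph.cycleGraph m)ᶜ) ∧
    (∀ n : ℕ, 5 ≤ n → RadioGraceful (SimpleGraph.pathGraph n)ᶜ) := by
  classical
  exact ⟨fun m => radioGraceful_compl_of_pathGraph_le pathGraph_le_cycleGraph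
      (cycleGraph_degree_le_two m),
    fun n => radioGraceful_compl_of_pathGraph_le le_rfl fun v =>
      (degree_le_of_le pathGraph_le_cycleGraph).trans (cycleGraph_degree_le_two n v)⟩
end
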